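/- arXiv:2010.02463 — 11 statements merged into one kernel-verified Lean document; each statement's English description precedes it below -/
import Mathlib

section
/- Let X be a separable metric space. Then X is totally bounded if and only if for every normalized positive linear functional Λ on C_b(X) there exists a sequence (P_n)_{n∈ℕ} of finitely supported Borel probability measures on X such that ∫ f dP_n → Λ f as n → ∞ for every uniformly continuous f ∈ C_b(X). -/
/-!
If `X` is totally bounded, cover it by finitely many `ε`-balls, take a partition of unity `φ i`
subordinate to them and put the mass `Λ (φ i)` at the centre of the `i`-th ball: the integral of
`f` against this measure is `Λ (∑ i, f (y i) • φ i)`, which differs from `Λ f` by at most the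
oscillation of `f` on `ε`-balls.

If `X` is not totally bounded it contains an `ε`-separated sequence `x`, and `f ↦ lim_U f (x k)`
along a free ultrafilter `U` is a normalized positive functional. The tent functions of radius
`ε / 2` around the points `x k`, `k ∈ A`, glue to a uniformly continuous function whose integral
against a finitely supported `P` is the sum over `A` of the masses `ν k` of the single tents. If the
`P n` converged to the ultrafilter functional, the total mass would tend to `1` while every single
`ν n k` tends to `0`; a gliding hump argument then yields an `A` along which these sums diverge.
-/

open MeasureTheory Filter Topology Metric Set BoundedContinuousFunction

section PositiveFunctional

variable {X : Type*} [TopologicalSpace X] {Λ : (X →ᵇ ℝ) →ₗ[ℝ] ℝ}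

theorem abs_apply_le_norm_of_nonneg (hpos : ∀ f, 0 ≤ f → 0 ≤ Λ f) (hone : Λ 1 = 1)
    (f : X →ᵇ ℝ) : |Λ f| ≤ ‖f‖ := by
  have hmono : ∀ g h : X →ᵇ ℝ, g ≤ h → Λ g ≤ Λ h := fun g h hgh => by
    simpa using hpos (h - g) (sub_nonneg.2 hgh)
  refine abs_le.2 ⟨?_, ?_⟩
  · simpa [hone] using hmono (-‖f‖ • 1) f fun x => by simpa using f.neg_norm_le_apply x
  · simpa [hone] using hmono f (‖f‖ • 1) fun x => by simpa using f.apply_le_norm x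

end PositiveFunctional

theorem exists_isProbabilityMeasure_integral_eq_sum {X ι : Type*} [MeasurableSpace X]
    [MeasurableSingletonClass X] [Fintype ι] (y : ι → X) {w : ι → ℝ} (hw0 : ∀ i, 0 ≤ w i)
    (hw1 : ∑ i, w i = 1) :
    ∃ P : Measure X, IsProbabilityMeasure P ∧ (∃ s : Finset X, P s = 1) ∧
      ∀ f : X → ℝ, ∫ x, f x ∂P = ∑ i, w i * f (y i) := by
  classical
  let P := Measure.sum fun i => ENNReal.ofReal (w i) • Measure.dirac (y i)
  have hP : IsProbabilityMeasure P := (hw1 ▸ hasSum_fintype w).isProbabilityMeasure_sum_dirac hw0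
  refine ⟨P, hP, ⟨Finset.univ.image y, ?_⟩, fun f => ?_⟩
  · rw [Measure.sum_apply _ (Finset.measurableSet _), ← measure_univ (μ := P),
      Measure.sum_apply _ MeasurableSet.univ]
    refine tsum_congr fun i => ?_
    simp
  · rw [integral_sum_dirac (fun i => ENNReal.ofReal_ne_top), tsum_fintype]
    simp [ENNReal.toReal_ofReal (hw0 _)]

section Forward

variable {X : Type*} [MetricSpace X]

theorem exists_partitionOfUnity_subordinate_ball {ε : ℝ} {t : Finset X}
    (ht : ∀ z, ∃ y ∈ t, dist z y < ε) :
    ∃ φ : t → X →ᵇ ℝ, (∀ i z, 0 ≤ φ i z) ∧ (∀ z, ∑ i, φ i z = 1) ∧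
      ∀ i z, φ i z ≠ 0 → dist z i < ε := by
  obtain ⟨ρ, hρ⟩ := PartitionOfUnity.exists_isSubordinate isClosed_univ
    (fun y : t => ball (y : X) ε) (fun _ => isOpen_ball) fun z _ => by
      obtain ⟨y, hy, hzy⟩ := ht z
      exact mem_iUnion.2 ⟨⟨y, hy⟩, hzy⟩
  refine ⟨fun i => .mkOfBound (ρ i) 1 fun a b => ?_, fun i z => ρ.nonneg i z,
    fun z => by simpa [finsum_eq_sum_of_fintype] using ρ.sum_eq_one (mem_univ z),
    fun i z hz => hρ i (subset_tsupport _ hz)⟩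
  rw [Real.dist_eq, abs_le]
  constructor <;> linarith [ρ.nonneg i a, ρ.le_one i a, ρ.nonneg i b, ρ.le_one i b]

variable [MeasurableSpace X] [BorelSpace X] {Λ : (X →ᵇ ℝ) →ₗ[ℝ] ℝ}

theorem exists_finitelySupported_dist_integral_le (hpos : ∀ f, 0 ≤ f → 0 ≤ Λ f)
    (hone : Λ 1 = 1) {ε : ℝ} {t : Finset X} (ht : ∀ z, ∃ y ∈ t, dist z y < ε) :
    ∃ P : Measure X, IsProbabilityMeasure P ∧ (∃ s : Finset X, P s = 1) ∧
      ∀ (f : X →ᵇ ℝ) (δ : ℝ), 0 ≤ δ → (∀ a b, dist a b < ε → dist (f a) (f b) ≤ δ) →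
        dist (∫ x, f x ∂P) (Λ f) ≤ δ := by
  obtain ⟨φ, hφ0, hφ1, hφε⟩ := exists_partitionOfUnity_subordinate_ball ht
  have hφsum : ∑ i, φ i = 1 := by ext z; simpa using hφ1 z
  obtain ⟨P, hP, hs, hint⟩ := exists_isProbabilityMeasure_integral_eq_sum (fun i : t => (i : X))
    (w := fun i => Λ (φ i)) (fun i => hpos _ (hφ0 i)) (by rw [← map_sum, hφsum, hone])
  refine ⟨P, hP, hs, fun f δ hδ hf => ?_⟩
  have hdiff : ∫ x, f x ∂P - Λ f = Λ (∑ i : t, f i • φ i - f) := by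
    simp [hint, map_sum, mul_comm]
  rw [Real.dist_eq, hdiff]
  refine (abs_apply_le_norm_of_nonneg hpos hone _).trans ((norm_le hδ).2 fun z => ?_)
  have hterm : ∀ i : t, |(f i - f z) * φ i z| ≤ δ * φ i z := fun i => by
    rw [abs_mul, abs_of_nonneg (hφ0 i z)]
    by_cases hz : φ i z = 0
    · simp [hz]
    · rw [← Real.dist_eq]
      exact mul_le_mul_of_nonneg_right (hf _ _ ((dist_comm _ _).trans_lt (hφε i z hz)))
        (hφ0 i z)
  calc ‖(∑ i : t, f i • φ i - f) z‖ = |∑ i : t, (f i - f z) * φ i z| := by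
        simp only [coe_sub, coe_sum, coe_smul, Pi.sub_apply, Finset.sum_apply,
          smul_eq_mul, Real.norm_eq_abs, sub_mul, Finset.sum_sub_distrib, ← Finset.mul_sum, hφ1,
          mul_one]
    _ ≤ ∑ i : t, δ * φ i z :=
        (Finset.abs_sum_le_sum_abs _ _).trans (Finset.sum_le_sum fun i _ => hterm i)
    _ = δ := by rw [← Finset.mul_sum, hφ1, mul_one]

theorem exists_seq_finitelySupported_tendsto_of_totallyBounded
    (hX : TotallyBounded (univ : Set X)) (hpos : ∀ f, 0 ≤ f → 0 ≤ Λ f) (hone : Λ 1 = 1) :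
    ∃ P : ℕ → Measure X, (∀ n, IsProbabilityMeasure (P n)) ∧ (∀ n, ∃ s : Finset X, P n s = 1) ∧
      ∀ f : X →ᵇ ℝ, UniformContinuous f → Tendsto (fun n => ∫ x, f x ∂P n) atTop (𝓝 (Λ f)) := by
  have hnet : ∀ n : ℕ, ∃ t : Finset X, ∀ z, ∃ y ∈ t, dist z y < 1 / (n + 1) := fun n => by
    obtain ⟨t, htf, htcov⟩ := totallyBounded_iff.1 hX _ Nat.one_div_pos_of_nat
    exact ⟨htf.toFinset, fun z => by simpa using htcov (mem_univ z)⟩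
  choose t ht using hnet
  choose P hP hs hPΛ using fun n => exists_finitelySupported_dist_integral_le hpos hone (ht n)
  refine ⟨P, hP, hs, fun f hf => Metric.tendsto_atTop.2 fun δ hδ => ?_⟩
  obtain ⟨η, hη, hfη⟩ := Metric.uniformContinuous_iff.1 hf (δ / 2) (half_pos hδ)
  obtain ⟨N, hN⟩ := exists_nat_one_div_lt hη
  refine ⟨N, fun n hn => ?_⟩
  have hnη : 1 / ((n : ℝ) + 1) < η := (Nat.one_div_le_one_div hn).trans_lt hN
  exact (hPΛ n f (δ / 2) (half_pos hδ).le fun a b hab => (hfη (hab.trans hnη)).le).trans_lt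
    (half_lt_self hδ)

end Forward

section UltrafilterLimit

variable {X ι : Type*} [TopologicalSpace X] (U : Ultrafilter ι) (x : ι → X)

theorem exists_tendsto_ultrafilter_comp (f : X →ᵇ ℝ) : ∃ a, Tendsto (fun i => f (x i)) U (𝓝 a) := by
  have hbdd : ∀ i, f (x i) ∈ Icc (-‖f‖) ‖f‖ := fun i =>
    ⟨f.neg_norm_le_apply (x i), f.apply_le_norm (x i)⟩
  obtain ⟨a, -, ha⟩ := isCompact_Icc.ultrafilter_le_nhds (U.map fun i => f (x i))
    (tendsto_principal.2 (.of_forall hbdd))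
  exact ⟨a, ha⟩

noncomputable def ultrafilterLimit : (X →ᵇ ℝ) →ₗ[ℝ] ℝ where
  toFun f := limUnder U fun i => f (x i)
  map_add' f g := by
    have hf := tendsto_nhds_limUnder (exists_tendsto_ultrafilter_comp U x f)
    have hg := tendsto_nhds_limUnder (exists_tendsto_ultrafilter_comp U x g)
    exact tendsto_nhds_unique (tendsto_nhds_limUnder (exists_tendsto_ultrafilter_comp U x (f + g)))
      (by simpa using hf.add hg)
  map_smul' c f := by
    have hf := tendsto_nhds_limUnder (exists_tendsto_ultrafilter_comp U x f)
    exact tendsto_nhds_unique (tendsto_nhds_limUnder (exists_tendsto_ultrafilter_comp U x (c • f)))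
      (by simpa using hf.const_mul c)

theorem tendsto_ultrafilterLimit (f : X →ᵇ ℝ) :
    Tendsto (fun i => f (x i)) U (𝓝 (ultrafilterLimit U x f)) :=
  tendsto_nhds_limUnder (exists_tendsto_ultrafilter_comp U x f)

theorem ultrafilterLimit_eq_of_eventually {f : X →ᵇ ℝ} {c : ℝ} (h : ∀ᶠ i in U, f (x i) = c) :
    ultrafilterLimit U x f = c :=
  tendsto_nhds_unique (tendsto_ultrafilterLimit U x f)
    (tendsto_const_nhds.congr' (h.mono fun _ h => h.symm))

theorem ultrafilterLimit_nonneg {f : X →ᵇ ℝ} (hf : 0 ≤ f) : 0 ≤ ultrafilterLimit U x f :=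
  ge_of_tendsto' (tendsto_ultrafilterLimit U x f) fun i => hf (x i)

theorem ultrafilterLimit_one : ultrafilterLimit U x 1 = 1 :=
  ultrafilterLimit_eq_of_eventually U x (univ_mem' fun _ => rfl)

end UltrafilterLimit

section Bump

variable {X : Type*} [MetricSpace X] {r : ℝ} (hr : 0 < r)

-- Since `infDist z ∅ = 0`, the bump of the empty set is the constant `1`.
noncomputable def infDistBump (S : Set X) : X →ᵇ ℝ :=
  .ofNormedAddCommGroup (fun z => max (1 - infDist z S / r) 0) (by fun_prop) 1 fun z => by
    have : 0 ≤ infDist z S / r := div_nonneg infDist_nonneg hr.le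
    rw [Real.norm_eq_abs, abs_le]
    exact ⟨by linarith [le_max_right (1 - infDist z S / r) 0], max_le (by linarith) zero_le_one⟩

variable {S : Set X} {z : X}

@[simp]
theorem infDistBump_apply : infDistBump hr S z = max (1 - infDist z S / r) 0 := rfl

theorem uniformContinuous_infDistBump : UniformContinuous (infDistBump hr S) :=
  (LipschitzWith.id.max_const 0).uniformContinuous.comp
    (uniformContinuous_const.sub ((uniformContinuous_infDist_pt S).div_const' r))

theorem infDistBump_of_mem (hz : z ∈ S) : infDistBump hr S z = 1 := by
  simp [infDist_zero_of_mem hz]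

theorem infDistBump_eq_zero (h : r ≤ infDist z S) : infDistBump hr S z = 0 := by
  simpa [sub_nonpos, le_div_iff₀ hr] using h

variable {ι : Type*} {x : ι → X} (hx : Pairwise fun i j => 2 * r ≤ dist (x i) (x j))
include hx

theorem lt_dist_of_dist_lt {j k : ι} (hjk : j ≠ k) (hz : dist z (x k) < r) :
    r < dist z (x j) := by
  linarith [hx hjk, dist_triangle_left (x j) (x k) z]

theorem infDistBump_image_eq {A : Set ι} {k : ι} (hk : k ∈ A) (hz : dist z (x k) < r) :
    infDistBump hr (x '' A) z = infDistBump hr {x k} z := by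
  have hinf : infDist z (x '' A) = dist z (x k) := by
    refine le_antisymm (infDist_le_dist_of_mem (mem_image_of_mem x hk))
      ((le_infDist ⟨_, mem_image_of_mem x hk⟩).2 ?_)
    rintro _ ⟨j, -, rfl⟩
    rcases eq_or_ne j k with rfl | hjk
    · exact le_rfl
    · linarith [lt_dist_of_dist_lt hx hjk hz]
  simp only [infDistBump_apply, hinf, infDist_singleton]

theorem infDistBump_image_eq_sum {A : Set ι} [DecidablePred (· ∈ A)] (hA : A.Nonempty)
    {K : Finset ι} (hK : ∀ k, dist z (x k) < r → k ∈ K) :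
    infDistBump hr (x '' A) z = ∑ k ∈ K with k ∈ A, infDistBump hr {x k} z := by
  by_cases h : ∃ k ∈ A, dist z (x k) < r
  · obtain ⟨k, hkA, hk⟩ := h
    rw [infDistBump_image_eq hr hx hkA hk,
      Finset.sum_eq_single_of_mem k (Finset.mem_filter.2 ⟨hK k hk, hkA⟩)]
    exact fun j _ hjk => infDistBump_eq_zero hr (by
      rw [infDist_singleton]; exact (lt_dist_of_dist_lt hx hjk hk).le)
  · push Not at h
    have hfar : r ≤ infDist z (x '' A) :=
      (le_infDist (hA.image x)).2 (by rintro _ ⟨k, hk, rfl⟩; exact h k hk)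
    rw [infDistBump_eq_zero hr hfar, eq_comm]
    exact Finset.sum_eq_zero fun k hk => infDistBump_eq_zero hr (by
      rw [infDist_singleton]; exact h k (Finset.mem_filter.1 hk).2)

theorem finite_setOf_exists_dist_lt (s : Finset X) : {k | ∃ z ∈ s, dist z (x k) < r}.Finite := by
  refine (s.finite_toSet.biUnion fun z _ =>
    Subsingleton.finite (s := {k | dist z (x k) < r}) ?_).subset fun k ⟨z, hz, hk⟩ =>
      mem_biUnion hz hk
  intro j hj k hk
  by_contra hjk
  exact (lt_dist_of_dist_lt hx hjk hk).not_ge hj.le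

end Bump

open Classical in
theorem exists_not_tendsto_sum_filter_mem {ν : ℕ → ℕ → ℝ} {K : ℕ → Finset ℕ}
    (hν : ∀ n k, 0 ≤ ν n k) (htot : Tendsto (fun n => ∑ k ∈ K n, ν n k) atTop (𝓝 1))
    (hpt : ∀ k, Tendsto (fun n => ν n k) atTop (𝓝 0)) :
    ∃ A : Set ℕ, ¬ ∃ c, Tendsto (fun n => ∑ k ∈ K n with k ∈ A, ν n k) atTop (𝓝 c) := by
  -- `T n` bounds all of `K 0, …, K n`. Each `u (j + 1)` carries mass `≥ 3/4` but only `≤ 1/8`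
  -- below `T (u j)`, so most of it lies in the block `[T (u j), T (u (j + 1)))`; `A` is the union
  -- of the even blocks.
  set T : ℕ → ℕ := fun n => (Finset.range (n + 1)).sup fun m => (K m).sup id + 1
  have hT : Monotone T := fun a b hab => Finset.sup_mono (Finset.range_subset_range.2 (by omega))
  have hKT : ∀ n, ∀ k ∈ K n, k < T n := fun n k hk =>
    (Nat.lt_succ_of_le (Finset.le_sup (f := id) hk)).trans_le
      (Finset.le_sup (f := fun m => (K m).sup id + 1) (Finset.self_mem_range_succ n))
  have hnext : ∀ N, ∃ n > N,
      3 / 4 ≤ ∑ k ∈ K n, ν n k ∧ ∑ k ∈ Finset.range (T N), ν n k ≤ 1 / 8 := by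
    intro N
    have hlow : Tendsto (fun n => ∑ k ∈ Finset.range (T N), ν n k) atTop (𝓝 0) := by
      simpa using tendsto_finsetSum _ fun k _ => hpt k
    obtain ⟨n, hn⟩ := ((htot.eventually (le_mem_nhds (show (3 / 4 : ℝ) < 1 by norm_num))).and
      ((hlow.eventually (ge_mem_nhds (show (0 : ℝ) < 1 / 8 by norm_num))).and
        (eventually_gt_atTop N))).exists
    exact ⟨n, hn.2.2, hn.1, hn.2.1⟩
  choose next hnext_gt hnext_tot hnext_low using hnext
  set u : ℕ → ℕ := fun j => next^[j] 0
  have hu : ∀ j, u (j + 1) = next (u j) := fun j => Function.iterate_succ_apply' next j 0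
  have hu_mono : StrictMono u := strictMono_nat_of_lt_succ fun j => (hu j) ▸ hnext_gt _
  have hTu : ∀ {a b}, a ≤ b → T (u a) ≤ T (u b) := fun hab => hT (hu_mono.monotone hab)
  set A : Set ℕ := {k | ∃ i, T (u (2 * i)) ≤ k ∧ k < T (u (2 * i + 1))}
  have hlow : ∀ n M, ∀ B ⊆ Finset.range M, ∑ k ∈ B, ν n k ≤ ∑ k ∈ Finset.range M, ν n k :=
    fun n M B hB => Finset.sum_le_sum_of_subset_of_nonneg hB fun k _ _ => hν n k
  have hbig : ∀ i, 5 / 8 ≤ ∑ k ∈ K (u (2 * i + 1)) with k ∈ A, ν (u (2 * i + 1)) k := by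
    intro i
    have hout : {k ∈ K (u (2 * i + 1)) | k ∉ A} ⊆ Finset.range (T (u (2 * i))) := by
      intro k hk
      rw [Finset.mem_filter] at hk
      by_contra hkT
      exact hk.2 ⟨i, not_lt.1 (Finset.mem_range.not.1 hkT), hKT _ k hk.1⟩
    have hsplit :=
      Finset.sum_filter_add_sum_filter_not (K (u (2 * i + 1))) (· ∈ A) (ν (u (2 * i + 1)))
    have htot' := hnext_tot (u (2 * i))
    have hlow' := hnext_low (u (2 * i))
    rw [← hu] at htot' hlow'
    linarith [hlow (u (2 * i + 1)) _ _ hout]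
  have hsmall : ∀ i, ∑ k ∈ K (u (2 * i + 2)) with k ∈ A, ν (u (2 * i + 2)) k ≤ 1 / 8 := by
    intro i
    have hin : {k ∈ K (u (2 * i + 2)) | k ∈ A} ⊆ Finset.range (T (u (2 * i + 1))) := by
      intro k hk
      rw [Finset.mem_filter] at hk
      obtain ⟨hkK, i', hi'k, hki'⟩ := hk
      have hi' : i' ≤ i := by
        by_contra! hii'
        have := hTu (show 2 * i + 2 ≤ 2 * i' by omega)
        have := hKT _ k hkK
        omega
      exact Finset.mem_range.2 (hki'.trans_le (hTu (show 2 * i' + 1 ≤ 2 * i + 1 by omega)))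
    have := hnext_low (u (2 * i + 1))
    rw [← hu] at this
    exact (hlow _ _ _ hin).trans this
  refine ⟨A, fun ⟨c, hc⟩ => ?_⟩
  have hsub : ∀ m, StrictMono fun i => u (2 * i + m) := fun m =>
    hu_mono.comp fun a b hab => by omega
  have h1 : 5 / 8 ≤ c := ge_of_tendsto' (hc.comp (hsub 1).tendsto_atTop) hbig
  have h2 : c ≤ 1 / 8 := le_of_tendsto' (hc.comp (hsub 2).tendsto_atTop) hsmall
  linarith

section Backward

variable {X : Type*} [MetricSpace X]

theorem exists_pairwise_le_dist_of_not_totallyBounded (h : ¬ TotallyBounded (univ : Set X)) :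
    ∃ ε > 0, ∃ x : ℕ → X, Pairwise fun i j => ε ≤ dist (x i) (x j) := by
  obtain ⟨ε, hε, hcov⟩ : ∃ ε > 0, ∀ t : Set X, t.Finite → ¬ univ ⊆ ⋃ y ∈ t, ball y ε := by
    simpa [totallyBounded_iff] using h
  have : Std.Symm fun a b : X => ε ≤ dist a b := ⟨fun a b h => by rwa [dist_comm]⟩
  obtain ⟨x, -, hx⟩ := exists_seq_of_forall_finset_exists' (fun _ => True)
    (fun a b : X => ε ≤ dist a b) fun s _ => by
      obtain ⟨z, -, hz⟩ := not_subset.1 (hcov s s.finite_toSet)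
      simp only [mem_iUnion, mem_ball, not_exists, not_lt] at hz
      exact ⟨z, trivial, fun y hy => (hz y hy).trans_eq (dist_comm _ _)⟩
  exact ⟨ε, hε, x, hx⟩

variable [MeasurableSpace X] [BorelSpace X] {r : ℝ} (hr : 0 < r) {x : ℕ → X}
  (hx : Pairwise fun i j => 2 * r ≤ dist (x i) (x j))
include hr hx

theorem integral_infDistBump_image {A : Set ℕ} [DecidablePred (· ∈ A)] (hA : A.Nonempty)
    {P : Measure X} [IsProbabilityMeasure P] {s : Finset X} (hs : P s = 1) {K : Finset ℕ}
    (hK : ∀ k, ∀ z ∈ s, dist z (x k) < r → k ∈ K) :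
    ∫ z, infDistBump hr (x '' A) z ∂P = ∑ k ∈ K with k ∈ A, ∫ z, infDistBump hr {x k} z ∂P := by
  have hae : ∀ᵐ z ∂P, z ∈ (s : Set X) := (prob_compl_eq_zero_iff s.measurableSet).2 hs
  rw [integral_congr_ae (hae.mono fun z hz => infDistBump_image_eq_sum hr hx hA fun k => hK k z hz),
    integral_finsetSum _ fun k _ => (infDistBump hr _).integrable P]

theorem not_forall_tendsto_integral_ultrafilterLimit (U : Ultrafilter ℕ)
    (hU : (U : Filter ℕ) ≤ cofinite) (P : ℕ → Measure X) [∀ n, IsProbabilityMeasure (P n)]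
    (hP : ∀ n, ∃ s : Finset X, P n s = 1) :
    ¬ ∀ f : X →ᵇ ℝ, UniformContinuous f →
      Tendsto (fun n => ∫ z, f z ∂P n) atTop (𝓝 (ultrafilterLimit U x f)) := by
  classical
  intro hconv
  choose s hs using hP
  set ν : ℕ → ℕ → ℝ := fun n k => ∫ z, infDistBump hr {x k} z ∂P n
  set K : ℕ → Finset ℕ := fun n => (finite_setOf_exists_dist_lt hx (s n)).toFinset
  have hint : ∀ A : Set ℕ, A.Nonempty → ∀ n,
      ∫ z, infDistBump hr (x '' A) z ∂P n = ∑ k ∈ K n with k ∈ A, ν n k := fun A hA n =>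
    integral_infDistBump_image hr hx hA (hs n) fun k z hz hzk => by simpa [K] using ⟨z, hz, hzk⟩
  have htot : Tendsto (fun n => ∑ k ∈ K n, ν n k) atTop (𝓝 1) := by
    have hone : ultrafilterLimit U x (infDistBump hr (x '' univ)) = 1 :=
      ultrafilterLimit_eq_of_eventually U x
        (.of_forall fun k => infDistBump_of_mem hr (mem_image_of_mem x trivial))
    refine (hone ▸ hconv _ (uniformContinuous_infDistBump hr)).congr fun n => ?_
    simp only [hint univ univ_nonempty, mem_univ, Finset.filter_true]
  have hpt : ∀ k, Tendsto (fun n => ν n k) atTop (𝓝 0) := fun k => by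
    have hzero : ultrafilterLimit U x (infDistBump hr {x k}) = 0 :=
      ultrafilterLimit_eq_of_eventually U x <| hU <| (eventually_cofinite_ne k).mono fun j hjk =>
        infDistBump_eq_zero hr (by rw [infDist_singleton]; linarith [hx hjk, hr])
    exact hzero ▸ hconv _ (uniformContinuous_infDistBump hr)
  obtain ⟨A, hA⟩ :=
    exists_not_tendsto_sum_filter_mem (fun n k => integral_nonneg fun z => by simp) htot hpt
  rcases A.eq_empty_or_nonempty with rfl | hAne
  · exact hA ⟨0, by simp⟩
  · exact hA ⟨_, (hconv _ (uniformContinuous_infDistBump hr)).congr (hint A hAne)⟩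

end Backward

theorem totallyBounded_iff_every_functional_weak_limit_of_finitely_supported_general
    {X : Type*} [MetricSpace X]
    [MeasurableSpace X] [BorelSpace X] :
    TotallyBounded (Set.univ : Set X) ↔
      ∀ Λ : BoundedContinuousFunction X ℝ →ₗ[ℝ] ℝ,
        (∀ f : BoundedContinuousFunction X ℝ, 0 ≤ f → 0 ≤ Λ f) →
        Λ 1 = 1 →
        ∃ P : ℕ → Measure X,
          (∀ n, IsProbabilityMeasure (P n)) ∧
          (∀ n, ∃ s : Finset X, P n ↑s = 1) ∧
          (∀ f : BoundedContinuousFunction X ℝ, UniformContinuous ⇑f →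
            Tendsto (fun n => ∫ x, f x ∂(P n)) atTop (𝓝 (Λ f))) := by
  refine ⟨fun hX Λ => exists_seq_finitelySupported_tendsto_of_totallyBounded hX, fun h => ?_⟩
  by_contra hX
  obtain ⟨ε, hε, x, hx⟩ := exists_pairwise_le_dist_of_not_totallyBounded hX
  have hx' : Pairwise fun i j => 2 * (ε / 2) ≤ dist (x i) (x j) := by
    simpa [mul_div_cancel₀] using hx
  let U := hyperfilter ℕ
  obtain ⟨P, hP, hfin, hconv⟩ :=
    h (ultrafilterLimit U x) (fun f => ultrafilterLimit_nonneg U x) (ultrafilterLimit_one U x)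
  exact not_forall_tendsto_integral_ultrafilterLimit (half_pos hε) hx' U hyperfilter_le_cofinite
    P hfin hconv

/-- A separable metric space `X` is totally bounded iff for every normalized
positive linear functional `Λ` on `C_b(X)` there is a sequence of finitely supported Borel
probability measures `P n` with `∫ f dP n → Λ f` for every uniformly continuous `f ∈ C_b(X)`. -/
theorem totallyBounded_iff_every_functional_weak_limit_of_finitely_supported
    {X : Type*} [MetricSpace X] [TopologicalSpace.SeparableSpace X]
    [MeasurableSpace X] [BorelSpace X] :
    TotallyBounded (Set.univ : Set X) ↔
      ∀ Λ : BoundedContinuousFunction X ℝ →ₗ[ℝ] ℝ,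
        (∀ f : BoundedContinuousFunction X ℝ, 0 ≤ f → 0 ≤ Λ f) →
        Λ 1 = 1 →
        ∃ P : ℕ → Measure X,
          (∀ n, IsProbabilityMeasure (P n)) ∧
          (∀ n, ∃ s : Finset X, P n ↑s = 1) ∧
          (∀ f : BoundedContinuousFunction X ℝ, UniformContinuous ⇑f →
            Tendsto (fun n => ∫ x, f x ∂(P n)) atTop (𝓝 (Λ f))) :=
  totallyBounded_iff_every_functional_weak_limit_of_finitely_supported_general
end

section
/- Let X be a totally bounded separable metric space and let Λ be a normalized positive linear functional on C_b(X). Then there exists a sequence (P_n)_{n∈ℕ} of finitely supported Borel probability measures on X such that ∫ f dP_n → Λ f as n → ∞ for every uniformly continuous f ∈ C_b(X). -/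
/-!
Cover `X` by finitely many `r`-balls `B(cᵢ, r)` (total boundedness), take a partition of unity
`φᵢ` subordinate to them and put mass `Λ φᵢ` at `cᵢ`. Since `Λ` is positive and `∑ φᵢ = 1`,
`|∑ Λ φᵢ · f cᵢ - Λ f| ≤ ∑ Λ (φᵢ · |f - f cᵢ|) ≤ ε` whenever `f` oscillates by at most `ε` on
`r`-balls. Letting `r → 0`, uniform continuity of `f` gives the convergence.
-/

open MeasureTheory Filter Topology

section PositiveFunctional

variable {E : Type*} [AddCommGroup E] [Lattice E] [IsOrderedAddMonoid E] [Module ℝ E]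

theorem abs_apply_le_apply_of_abs_le (Λ : E →ₗ[ℝ] ℝ) (hpos : ∀ f, 0 ≤ f → 0 ≤ Λ f) {g h : E}
    (hgh : |g| ≤ h) : |Λ g| ≤ Λ h := by
  obtain ⟨hg_le, hneg_le⟩ := abs_le'.mp hgh
  have hsub := hpos (h - g) (sub_nonneg.mpr hg_le)
  have hadd := hpos (h + g) (by simpa [add_comm] using sub_nonneg.mpr hneg_le)
  rw [map_sub] at hsub
  rw [map_add] at hadd
  exact abs_le.mpr ⟨by linarith, by linarith⟩

end PositiveFunctional

namespace BoundedContinuousFunction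

variable {X : Type*} [TopologicalSpace X] {ι : Type*} [Fintype ι]

theorem exists_partition_of_unity_support_subset [NormalSpace X] [ParacompactSpace X]
    (U : ι → Set X) (hUo : ∀ i, IsOpen (U i)) (hU : ⋃ i, U i = Set.univ) :
    ∃ φ : ι → X →ᵇ ℝ, (∀ i, 0 ≤ φ i) ∧ ∑ i, φ i = 1 ∧ ∀ i, Function.support (φ i) ⊆ U i := by
  obtain ⟨ρ, hρ⟩ := PartitionOfUnity.exists_isSubordinate isClosed_univ U hUo hU.ge
  refine ⟨fun i => mkOfBound (ρ i) 1 fun x y => ?_, fun i x => ρ.nonneg i x, ?_,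
    fun i => (subset_tsupport _).trans (hρ i)⟩
  · rw [Real.dist_eq, abs_le]
    constructor <;> linarith [ρ.nonneg i x, ρ.nonneg i y, ρ.le_one i x, ρ.le_one i y]
  · ext x
    simpa [finsum_eq_sum_of_fintype] using ρ.sum_eq_one (Set.mem_univ x)

theorem abs_sum_mul_apply_sub_le (Λ : (X →ᵇ ℝ) →ₗ[ℝ] ℝ) (hpos : ∀ f, 0 ≤ f → 0 ≤ Λ f)
    (hone : Λ 1 = 1) {φ : ι → X →ᵇ ℝ} (hφ0 : ∀ i, 0 ≤ φ i) (hφ1 : ∑ i, φ i = 1) (c : ι → X)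
    {f : X →ᵇ ℝ} {ε : ℝ} (hf : ∀ i x, φ i x ≠ 0 → |f x - f (c i)| ≤ ε) :
    |∑ i, Λ (φ i) * f (c i) - Λ f| ≤ ε := by
  set g : ι → X →ᵇ ℝ := fun i => φ i * f - f (c i) • φ i
  have hφx : ∀ i x, 0 ≤ φ i x := fun i x => hφ0 i x
  have hg : ∀ i, |g i| ≤ ε • φ i := fun i x => by
    have hgx : g i x = φ i x * (f x - f (c i)) := by simp [g]; ring
    change |g i x| ≤ ε * φ i x
    rw [hgx, abs_mul, abs_of_nonneg (hφx i x), mul_comm ε]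
    by_cases hx : φ i x = 0
    · simp [hx]
    · exact mul_le_mul_of_nonneg_left (hf i x hx) (hφx i x)
  have hΛf : Λ f = ∑ i, Λ (φ i * f) := by
    rw [← map_sum, ← Finset.sum_mul, hφ1, one_mul]
  have hsum : ∑ i, Λ (φ i) * f (c i) - Λ f = -∑ i, Λ (g i) := by
    simp only [g, hΛf, map_sub, map_smul, smul_eq_mul, Finset.sum_sub_distrib, mul_comm]
    ring
  calc |∑ i, Λ (φ i) * f (c i) - Λ f|
      ≤ ∑ i, |Λ (g i)| := by rw [hsum, abs_neg]; exact Finset.abs_sum_le_sum_abs _ _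
    _ ≤ ∑ i, ε * Λ (φ i) := Finset.sum_le_sum fun i _ => by
        simpa using abs_apply_le_apply_of_abs_le Λ hpos (hg i)
    _ = ε := by rw [← Finset.mul_sum, ← map_sum, hφ1, hone, mul_one]

end BoundedContinuousFunction

namespace MeasureTheory.Measure

variable {X : Type*} [MeasurableSpace X] {ι : Type*} [Fintype ι]

-- Negative weights are truncated to `0` by `ENNReal.ofReal`.
noncomputable def weightedDiracSum (w : ι → ℝ) (c : ι → X) : Measure X :=
  ∑ i, ENNReal.ofReal (w i) • dirac (c i)

variable {w : ι → ℝ} {c : ι → X}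

theorem weightedDiracSum_apply_eq_one (hw0 : ∀ i, 0 ≤ w i) (hw1 : ∑ i, w i = 1) {s : Set X}
    (hs : ∀ i, c i ∈ s) : weightedDiracSum w c s = 1 := by
  simp only [weightedDiracSum, coe_finsetSum, Finset.sum_apply, smul_apply, smul_eq_mul,
    dirac_apply_of_mem (hs _), mul_one]
  rw [← ENNReal.ofReal_sum_of_nonneg fun i _ => hw0 i, hw1, ENNReal.ofReal_one]

theorem isProbabilityMeasure_weightedDiracSum (hw0 : ∀ i, 0 ≤ w i) (hw1 : ∑ i, w i = 1) :
    IsProbabilityMeasure (weightedDiracSum w c) :=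
  ⟨weightedDiracSum_apply_eq_one hw0 hw1 fun i => Set.mem_univ (c i)⟩

theorem integral_weightedDiracSum [MeasurableSingletonClass X] (hw0 : ∀ i, 0 ≤ w i)
    (f : X → ℝ) : ∫ x, f x ∂weightedDiracSum w c = ∑ i, w i * f (c i) := by
  rw [weightedDiracSum, integral_finsetSum_measure fun i _ =>
    (integrable_dirac enorm_lt_top).smul_measure ENNReal.ofReal_ne_top]
  refine Finset.sum_congr rfl fun i _ => ?_
  rw [integral_smul_measure, integral_dirac, ENNReal.toReal_ofReal (hw0 i), smul_eq_mul]

end MeasureTheory.Measure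

open BoundedContinuousFunction

theorem exists_finitelySupported_abs_integral_sub_le {X : Type*} [MetricSpace X]
    [MeasurableSpace X] [BorelSpace X] (hX : TotallyBounded (Set.univ : Set X))
    (Λ : (X →ᵇ ℝ) →ₗ[ℝ] ℝ) (hpos : ∀ f, 0 ≤ f → 0 ≤ Λ f) (hone : Λ 1 = 1) {r : ℝ}
    (hr : 0 < r) :
    ∃ μ : Measure X, IsProbabilityMeasure μ ∧ (∃ s : Finset X, μ s = 1) ∧
      ∀ (f : X →ᵇ ℝ) (ε : ℝ), (∀ x y, dist x y < r → |f x - f y| ≤ ε) →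
        |∫ x, f x ∂μ - Λ f| ≤ ε := by
  obtain ⟨t, ht, htX⟩ := Metric.totallyBounded_iff.mp hX r hr
  lift t to Finset X using ht
  have hcover : ⋃ i : t, Metric.ball (i : X) r = Set.univ := by
    simpa [Set.iUnion_subtype, Set.eq_univ_iff_forall] using htX
  obtain ⟨φ, hφ0, hφ1, hφU⟩ := exists_partition_of_unity_support_subset
    (fun i : t => Metric.ball (i : X) r) (fun _ => Metric.isOpen_ball) hcover
  have hw0 : ∀ i, 0 ≤ Λ (φ i) := fun i => hpos _ (hφ0 i)
  have hw1 : ∑ i, Λ (φ i) = 1 := by rw [← map_sum, hφ1, hone]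
  refine ⟨Measure.weightedDiracSum (fun i => Λ (φ i)) Subtype.val,
    Measure.isProbabilityMeasure_weightedDiracSum hw0 hw1,
    ⟨t, Measure.weightedDiracSum_apply_eq_one hw0 hw1 fun i => i.2⟩, fun f ε hf => ?_⟩
  rw [Measure.integral_weightedDiracSum hw0]
  exact abs_sum_mul_apply_sub_le Λ hpos hone hφ0 hφ1 _ fun i x hx => hf x i (hφU i hx)

theorem exists_finitely_supported_seq_tendsto_functional_general
    {X : Type*} [MetricSpace X]
    [MeasurableSpace X] [BorelSpace X]
    (hX : TotallyBounded (Set.univ : Set X))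
    (Λ : BoundedContinuousFunction X ℝ →ₗ[ℝ] ℝ)
    (hpos : ∀ f : BoundedContinuousFunction X ℝ, 0 ≤ f → 0 ≤ Λ f)
    (hone : Λ 1 = 1) :
    ∃ P : ℕ → Measure X,
      (∀ n, IsProbabilityMeasure (P n)) ∧
      (∀ n, ∃ s : Finset X, P n ↑s = 1) ∧
      (∀ f : BoundedContinuousFunction X ℝ, UniformContinuous ⇑f →
        Tendsto (fun n => ∫ x, f x ∂(P n)) atTop (𝓝 (Λ f))) := by
  choose P hP hsupp happrox using fun n : ℕ =>
    exists_finitelySupported_abs_integral_sub_le hX Λ hpos hone (Nat.one_div_pos_of_nat (n := n))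
  refine ⟨P, hP, hsupp, fun f hf => Metric.tendsto_atTop.mpr fun ε hε => ?_⟩
  obtain ⟨δ, hδ, hfδ⟩ := Metric.uniformContinuous_iff.mp hf (ε / 2) (half_pos hε)
  obtain ⟨N, hN⟩ := exists_nat_one_div_lt hδ
  refine ⟨N, fun n hn => ?_⟩
  have hmesh : 1 / ((n : ℝ) + 1) < δ := (Nat.one_div_le_one_div hn).trans_lt hN
  have hclose := happrox n f (ε / 2) fun x y hxy => (Real.dist_eq _ _ ▸ hfδ (hxy.trans hmesh)).le
  rw [Real.dist_eq]
  linarith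

/-- On a totally bounded separable metric space, every normalized positive
linear functional on `C_b(X)` is a weak limit (against bounded uniformly continuous test
functions) of a sequence of finitely supported Borel probability measures. -/
theorem exists_finitely_supported_seq_tendsto_functional
    {X : Type*} [MetricSpace X] [TopologicalSpace.SeparableSpace X]
    [MeasurableSpace X] [BorelSpace X]
    (hX : TotallyBounded (Set.univ : Set X))
    (Λ : BoundedContinuousFunction X ℝ →ₗ[ℝ] ℝ)
    (hpos : ∀ f : BoundedContinuousFunction X ℝ, 0 ≤ f → 0 ≤ Λ f)
    (hone : Λ 1 = 1) :
    ∃ P : ℕ → Measure X,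
      (∀ n, IsProbabilityMeasure (P n)) ∧
      (∀ n, ∃ s : Finset X, P n ↑s = 1) ∧
      (∀ f : BoundedContinuousFunction X ℝ, UniformContinuous ⇑f →
        Tendsto (fun n => ∫ x, f x ∂(P n)) atTop (𝓝 (Λ f))) :=
  exists_finitely_supported_seq_tendsto_functional_general hX Λ hpos hone
end

section
/- Let X be a metric space, let ε > 0 and let y : ℕ → X satisfy d(y i, y j) > ε for all i ≠ j, and let U be a free (nonprincipal) ultrafilter on ℕ. Then there is no sequence (μ_n)_{n∈ℕ} of Borel probability measures on X with the property that for every bounded uniformly continuous f : X → ℝ and every L ∈ ℝ, if f ∘ y tends to L along U then ∫ f dμ_n → L as n → ∞. -/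
/-!
For `S ⊆ ℕ` let `f_S` be the `ε/2`-thickened indicator of `y '' S`. By separation `f_S ∘ y` is
the indicator of `S`, so the assumed convergence forces `∫ f_S dμ_n → 1` for `S ∈ U` and
`∫ f_S dμ_n → 0` for finite `S`, while dominated convergence for each fixed `μ_n` gives
`∫ f_{[m,∞)} dμ_n → 0` as `m → ∞`. Alternating between these two limits (a gliding hump) yields
blocks `[a_i, a_{i+1})` and indices `b_i → ∞` with `∫ f_S dμ_{b_i} < 1/2` whenever `S` misses
the `i`-th block. The union `T` of the even blocks misses every odd block and its complement
every even one, so neither `T` nor `Tᶜ` can belong to `U`.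
-/

open MeasureTheory Filter Topology Metric Set

section ThickenedIndicator

variable {α : Type*} [PseudoEMetricSpace α] {δ : ℝ} (hδ : 0 < δ)

theorem thickenedIndicator_union_le (A B : Set α) (x : α) :
    thickenedIndicator hδ (A ∪ B) x ≤
      thickenedIndicator hδ A x + thickenedIndicator hδ B x := by
  rcases le_total (infEDist x A) (infEDist x B) with h | h
  · have : thickenedIndicator hδ (A ∪ B) x = thickenedIndicator hδ A x := by
      simp only [thickenedIndicator_apply, thickenedIndicatorAux, infEDist_union, min_eq_left h]
    exact this.trans_le le_self_add
  · have : thickenedIndicator hδ (A ∪ B) x = thickenedIndicator hδ B x := by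
      simp only [thickenedIndicator_apply, thickenedIndicatorAux, infEDist_union, min_eq_right h]
    exact this.trans_le le_add_self

variable [MeasurableSpace α] [OpensMeasurableSpace α] (μ : Measure α) [IsFiniteMeasure μ]

theorem integral_thickenedIndicator_le_add {E A B : Set α} (h : E ⊆ A ∪ B) :
    ∫ x, (thickenedIndicator hδ E x : ℝ) ∂μ ≤
      ∫ x, (thickenedIndicator hδ A x : ℝ) ∂μ + ∫ x, (thickenedIndicator hδ B x : ℝ) ∂μ := by
  have hint : ∀ F : Set α, Integrable (fun x => (thickenedIndicator hδ F x : ℝ)) μ :=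
    fun F => BoundedContinuousFunction.integrable_of_nnreal μ _
  rw [← integral_add (hint A) (hint B)]
  refine integral_mono (hint E) ((hint A).add (hint B)) fun x => ?_
  exact_mod_cast
    (thickenedIndicator_subset hδ h x).trans (thickenedIndicator_union_le hδ A B x)

theorem tendsto_integral_thickenedIndicator_zero {E : ℕ → Set α}
    (h : ∀ x, ∀ᶠ m in atTop, x ∉ thickening δ (E m)) :
    Tendsto (fun m => ∫ x, (thickenedIndicator hδ (E m) x : ℝ) ∂μ) atTop (𝓝 0) := by
  have hbound : ∀ m x, ‖(thickenedIndicator hδ (E m) x : ℝ)‖ ≤ 1 := fun m x => by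
    simpa using thickenedIndicator_le_one hδ (E m) x
  have hzero : ∀ x, Tendsto (fun m => (thickenedIndicator hδ (E m) x : ℝ)) atTop (𝓝 0) :=
    fun x => tendsto_const_nhds.congr' <| (h x).mono fun m hm => by
      simp [thickenedIndicator_zero hδ _ hm]
  simpa using tendsto_integral_of_dominated_convergence (fun _ => 1)
    (fun m => (BoundedContinuousFunction.integrable_of_nnreal μ _).aestronglyMeasurable)
    (integrable_const 1) (fun m => ae_of_all _ (hbound m)) (ae_of_all _ hzero)

end ThickenedIndicator

section SeparatedSequence

variable {X : Type*} [PseudoMetricSpace X] {ε δ : ℝ} {y : ℕ → X}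
  (hy : ∀ i j : ℕ, i ≠ j → ε < dist (y i) (y j))
include hy

theorem thickenedIndicator_image_comp_of_separated (hδ : 0 < δ) (hδε : δ ≤ ε)
    (S : Set ℕ) :
    (fun k => (thickenedIndicator hδ (y '' S) (y k) : ℝ)) = S.indicator 1 := by
  funext k
  by_cases hk : k ∈ S
  · simp [hk, thickenedIndicator_one hδ _ (mem_image_of_mem y hk)]
  · refine (congrArg _ (thickenedIndicator_zero hδ _ ?_)).trans (by simp [hk])
    rw [mem_thickening_iff]
    rintro ⟨_, ⟨j, hj, rfl⟩, hlt⟩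
    linarith [hy k j (ne_of_mem_of_not_mem hj hk).symm]

theorem eventually_notMem_thickening_image_Ici (hδε : 2 * δ ≤ ε) (x : X) :
    ∀ᶠ m in atTop, x ∉ thickening δ (y '' Ici m) := by
  have hnear : {k | dist x (y k) < δ}.Subsingleton :=
    fun j (hj : dist x (y j) < δ) k (hk : dist x (y k) < δ) => by
      by_contra hjk
      linarith [hy j k hjk, dist_triangle_left (y j) (y k) x]
  obtain ⟨M, hM⟩ := hnear.finite.bddAbove
  filter_upwards [eventually_gt_atTop M] with m hm
  rw [mem_thickening_iff]
  rintro ⟨_, ⟨k, hk, rfl⟩, hlt⟩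
  exact (hM hlt).not_gt (hm.trans_le hk)

end SeparatedSequence

section GlidingHump

variable {ν : ℕ → Set ℕ → ℝ}
  (hhead : ∀ m, Tendsto (fun n => ν n (Iio m)) atTop (𝓝 0))
  (htail : ∀ n, Tendsto (fun m => ν n (Ici m)) atTop (𝓝 0))
include hhead htail

theorem exists_blocks_of_tendsto_zero :
    ∃ a b : ℕ → ℕ, StrictMono a ∧ (∀ i, i ≤ b i) ∧
      ∀ i, ν (b i) (Iio (a i)) < 1 / 4 ∧ ν (b i) (Ici (a (i + 1))) < 1 / 4 := by
  have hquarter : Iio (1 / 4 : ℝ) ∈ 𝓝 0 := Iio_mem_nhds (by norm_num)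
  choose b hmb hb using fun m =>
    ((eventually_ge_atTop m).and ((hhead m).eventually hquarter)).exists
  choose next hlt hnext using fun m =>
    ((eventually_gt_atTop m).and ((htail (b m)).eventually hquarter)).exists
  have ha_succ : ∀ i, next^[i + 1] 0 = next (next^[i] 0) := fun i =>
    Function.iterate_succ_apply' _ _ _
  have ha : StrictMono fun i => next^[i] 0 :=
    strictMono_nat_of_lt_succ fun i => (ha_succ i).symm ▸ hlt _
  exact ⟨_, b ∘ _, ha, fun i => (ha.id_le i).trans (hmb _),
    fun i => ⟨hb _, (ha_succ i).symm ▸ hnext _⟩⟩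

theorem exists_not_tendsto_one_and_compl
    (hsub : ∀ n {S A B : Set ℕ}, S ⊆ A ∪ B → ν n S ≤ ν n A + ν n B) :
    ∃ T : Set ℕ, ¬Tendsto (ν · T) atTop (𝓝 1) ∧ ¬Tendsto (ν · Tᶜ) atTop (𝓝 1) := by
  obtain ⟨a, b, ha, hb, hsmall⟩ := exists_blocks_of_tendsto_zero hhead htail
  have hmiss : ∀ i S, Disjoint S (Ico (a i) (a (i + 1))) → ν (b i) S < 1 / 2 := by
    intro i S h
    have hS : S ⊆ Iio (a i) ∪ Ici (a (i + 1)) := fun k hk =>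
      (lt_or_ge k (a i)).imp id fun hik =>
        not_lt.1 fun hki => disjoint_left.1 h hk ⟨hik, hki⟩
    linarith [hsub (b i) hS, hsmall i]
  have hnot : ∀ (S : Set ℕ) (p : ℕ → Prop), (∀ N, ∃ i, N ≤ i ∧ p i) →
      (∀ i, p i → Disjoint S (Ico (a i) (a (i + 1)))) → ¬Tendsto (ν · S) atTop (𝓝 1) := by
    intro S p hp hpS hS
    obtain ⟨N, hN⟩ := eventually_atTop.1 (hS.eventually (lt_mem_nhds one_half_lt_one))
    obtain ⟨i, hi, hpi⟩ := hp N
    exact (hN (b i) (hi.trans (hb i))).not_gt (hmiss i S (hpS i hpi))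
  refine ⟨{k | ∃ i, Even i ∧ k ∈ Ico (a i) (a (i + 1))},
    hnot _ (¬Even ·) (fun N => ⟨2 * N + 1, by omega, Nat.not_even_two_mul_add_one N⟩) ?_,
    hnot _ Even (fun N => ⟨2 * N, by omega, even_two_mul N⟩) ?_⟩
  · refine fun i hi => disjoint_left.2 fun k ⟨j, hj, hkj⟩ hki => ?_
    have hij : i ≠ j := fun h => hi (h ▸ hj)
    exact disjoint_left.1 (ha.monotone.pairwise_disjoint_on_Ico_succ hij) hki hkj
  · exact fun i hi => disjoint_left.2 fun k hk hk' => hk ⟨i, hi, hk'⟩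

end GlidingHump

/-- If `y : ℕ → X` is a uniformly `ε`-separated sequence in a metric space and
`U` is a free ultrafilter on `ℕ`, then no sequence of Borel probability measures converges
weakly (against bounded uniformly continuous test functions) to the charge determined by `U`
and `y`, i.e. there is no sequence `μ n` such that `∫ f dμ n → L` whenever `f ∘ y → L`
along `U` for bounded uniformly continuous `f`. -/
theorem no_weak_limit_to_ultrafilter_charge_on_separated_sequence
    {X : Type*} [MetricSpace X] [MeasurableSpace X] [BorelSpace X]
    (ε : ℝ) (hε : 0 < ε) (y : ℕ → X)
    (hy : ∀ i j : ℕ, i ≠ j → ε < dist (y i) (y j))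
    (U : Ultrafilter ℕ) (hU : (U : Filter ℕ) ≤ Filter.cofinite) :
    ¬ ∃ μ : ℕ → Measure X,
        (∀ n, IsProbabilityMeasure (μ n)) ∧
        (∀ f : X → ℝ, UniformContinuous f → (∃ C : ℝ, ∀ x, |f x| ≤ C) →
          ∀ L : ℝ, Tendsto (f ∘ y) (U : Filter ℕ) (𝓝 L) →
            Tendsto (fun n => ∫ x, f x ∂(μ n)) atTop (𝓝 L)) := by
  rintro ⟨μ, hμ, hconv⟩
  have hδ : 0 < ε / 2 := half_pos hε
  set f : Set ℕ → X → ℝ := fun S x => thickenedIndicator hδ (y '' S) x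
  have hlim : ∀ S L, Tendsto (S.indicator 1) U (𝓝 L) →
      Tendsto (fun n => ∫ x, f S x ∂μ n) atTop (𝓝 L) := fun S L hL =>
    hconv (f S)
      (uniformContinuous_subtype_val.comp
        (lipschitzWith_thickenedIndicator hδ _).uniformContinuous)
      ⟨1, fun x => by
        simpa only [f, NNReal.abs_eq, NNReal.coe_le_one] using thickenedIndicator_le_one hδ _ x⟩
      L (by
        rwa [Function.comp_def, thickenedIndicator_image_comp_of_separated hy hδ (by linarith)])
  have hone : ∀ S ∈ U, Tendsto (fun n => ∫ x, f S x ∂μ n) atTop (𝓝 1) := fun S hS =>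
    hlim S 1 <| tendsto_const_nhds.congr' <|
      eventually_of_mem hS fun k hk => (indicator_of_mem hk 1).symm
  have hhead : ∀ m, Tendsto (fun n => ∫ x, f (Iio m) x ∂μ n) atTop (𝓝 0) := fun m =>
    hlim _ 0 <| tendsto_const_nhds.congr' <|
      eventually_of_mem (hU (finite_Iio m).compl_mem_cofinite) fun k hk =>
        (indicator_of_notMem hk 1).symm
  have htail : ∀ n, Tendsto (fun m => ∫ x, f (Ici m) x ∂μ n) atTop (𝓝 0) := fun n =>
    haveI := hμ n
    tendsto_integral_thickenedIndicator_zero hδ (μ n)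
      (eventually_notMem_thickening_image_Ici hy (by linarith))
  obtain ⟨T, hT, hTc⟩ := exists_not_tendsto_one_and_compl hhead htail fun n S A B h =>
    haveI := hμ n
    integral_thickenedIndicator_le_add hδ (μ n) (image_union y A B ▸ image_mono h)
  rcases U.mem_or_compl_mem T with hTU | hTU
  exacts [hT (hone T hTU), hTc (hone _ hTU)]
end

section
/- Let X be a totally bounded metric space and let Λ be a normalized positive linear functional on C_b(X). Then there exists a Borel probability measure μ̂ on the completion X̂ of X (which is a compact metric space) such that for every uniformly continuous f ∈ C_b(X), Λ f = ∫ f̂ dμ̂, where f̂ : X̂ → ℝ is the unique continuous extension of f to the completion. -/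
/-!
The completion `X̂` is compact, so every continuous function on it is compactly supported and
`g ↦ Λ (g ∘ ι)`, with `ι : X → X̂` the canonical map, is a positive linear functional on
`C_c(X̂, ℝ)`. The Riesz–Markov–Kakutani theorem represents it by a measure, a probability measure
because `Λ 1 = 1`, and a uniformly continuous `f` is `f̂ ∘ ι`, where `f̂` is its extension.
-/

open MeasureTheory BoundedContinuousFunction CompactlySupported CompactlySupportedContinuousMap

theorem UniformSpace.Completion.compactSpace_of_totallyBounded {α : Type*} [UniformSpace α]
    (h : TotallyBounded (Set.univ : Set α)) : CompactSpace (Completion α) := by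
  refine ⟨?_⟩
  rw [← (denseRange_coe (α := α)).closure_range, ← Set.image_univ]
  exact (h.image (uniformContinuous_coe α)).closure.isCompact_of_isClosed isClosed_closure

noncomputable def PositiveLinearMap.compactlySupportedPullback {Y Z : Type*} [TopologicalSpace Y]
    [TopologicalSpace Z] (φ : C(Y, Z)) (Λ : (Y →ᵇ ℝ) →ₗ[ℝ] ℝ) (hΛ : ∀ f, 0 ≤ f → 0 ≤ Λ f) :
    C_c(Z, ℝ) →ₚ[ℝ] ℝ :=
  PositiveLinearMap.mk₀
    { toFun g := Λ (g.toBoundedContinuousFunction.compContinuous φ)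
      map_add' g h := by rw [← map_add]; rfl
      map_smul' c g := by rw [← map_smul]; rfl }
    fun g hg => hΛ _ fun y => hg (φ y)

theorem RealRMK.isProbabilityMeasure_rieszMeasure {Z : Type*} [TopologicalSpace Z] [T2Space Z]
    [CompactSpace Z] [MeasurableSpace Z] [BorelSpace Z] (Λ : C_c(Z, ℝ) →ₚ[ℝ] ℝ)
    (hΛ : Λ (continuousMapEquiv 1) = 1) : IsProbabilityMeasure (rieszMeasure Λ) := by
  rw [isProbabilityMeasure_iff_real, ← hΛ, ← integral_rieszMeasure]
  simp

open UniformSpace in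
/-- If `X` is a totally bounded metric space and `Λ` is a normalized positive
linear functional on `C_b(X)`, then there is a Borel probability measure `μ` on the completion
of `X` representing `Λ` on bounded uniformly continuous functions, via their unique continuous
extensions to the completion. -/
theorem exists_measure_on_completion_representing_functional
    {X : Type*} [MetricSpace X]
    [MeasurableSpace (UniformSpace.Completion X)] [BorelSpace (UniformSpace.Completion X)]
    (hX : TotallyBounded (Set.univ : Set X))
    (Λ : BoundedContinuousFunction X ℝ →ₗ[ℝ] ℝ)
    (hpos : ∀ f : BoundedContinuousFunction X ℝ, 0 ≤ f → 0 ≤ Λ f)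
    (hone : Λ 1 = 1) :
    ∃ μ : Measure (UniformSpace.Completion X), IsProbabilityMeasure μ ∧
      ∀ f : BoundedContinuousFunction X ℝ, UniformContinuous ⇑f →
        Λ f = ∫ x, UniformSpace.Completion.extension (⇑f) x ∂μ := by
  have := Completion.compactSpace_of_totallyBounded hX
  set Λ' := PositiveLinearMap.compactlySupportedPullback ⟨_, Completion.continuous_coe X⟩ Λ hpos
  refine ⟨RealRMK.rieszMeasure Λ', RealRMK.isProbabilityMeasure_rieszMeasure Λ' hone,
    fun f hf => ?_⟩
  let g : C(Completion X, ℝ) := ⟨_, Completion.continuous_extension (f := f)⟩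
  refine Eq.trans (congrArg Λ ?_) (RealRMK.integral_rieszMeasure Λ' (continuousMapEquiv g)).symm
  ext x
  exact (Completion.extension_coe hf x).symm
end

section
/- Let U be a free (nonprincipal) ultrafilter on ℕ. Then there is no sequence (μ_n)_{n∈ℕ} of countably additive probability measures on ℕ (with the discrete σ-algebra of all subsets) such that for every S ⊆ ℕ, the sequence μ_n(S) converges to 1 if S ∈ U and converges to 0 if S ∉ U. -/
/-!
Each `μ n` is countably additive, so `μ n (Ico a b) → μ n (Ici a)` as `b → ∞`, while
`μ n (Ici a) → 1` as `n → ∞` because the cofinite set `Ici a` lies in `U`. Alternating these two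
limits extracts indices `n k` and consecutive intervals `B k = Ico (N k) (N (k + 1))` with
`μ (n k) (B k) > 1/2`. The union of the even-indexed blocks and that of the odd-indexed blocks are
disjoint, so one of them, `X`, is not in `U`; then `μ n X → 0`, although `μ (n k) X > 1/2` along
the corresponding subsequence.
-/

open MeasureTheory Filter Topology Set ENNReal Function

theorem MeasureTheory.exists_strictMono_lt_measure_Ico {α : Type*} [MeasurableSpace α]
    [LinearOrder α] [NoMaxOrder α] [Nonempty α] [IsCountablyGenerated (atTop : Filter α)]
    {μ : ℕ → Measure α} {c : ℝ≥0∞} (h : ∀ a, ∀ᶠ n in atTop, c < μ n (Ici a)) :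
    ∃ (n : ℕ → ℕ) (N : ℕ → α), StrictMono n ∧ Monotone N ∧
      ∀ k, c < μ (n k) (Ico (N k) (N (k + 1))) := by
  have step : ∀ p : ℕ × α, ∃ q : ℕ × α, p.1 < q.1 ∧ p.2 ≤ q.2 ∧ c < μ q.1 (Ico p.2 q.2) := by
    rintro ⟨m, a⟩
    obtain ⟨n, hmn, hn⟩ := ((eventually_gt_atTop m).and (h a)).exists
    obtain ⟨b, hab, hb⟩ :=
      ((eventually_ge_atTop a).and ((tendsto_measure_Ico_atTop _ a).eventually_const_lt hn)).exists
    exact ⟨(n, b), hmn, hab, hb⟩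
  choose next hnext using step
  set g : ℕ → ℕ × α := fun k => next^[k] (0, Classical.arbitrary α)
  have hg : ∀ k, g (k + 1) = next (g k) := fun k => iterate_succ_apply' ..
  refine ⟨fun k => (g (k + 1)).1, fun k => (g k).2, ?_, ?_, fun k => ?_⟩
  · exact strictMono_nat_of_lt_succ fun k => by simpa only [hg (k + 1)] using (hnext _).1
  · exact monotone_nat_of_le_succ fun k => by simpa only [hg k] using (hnext _).2.1
  · simpa only [hg k] using (hnext _).2.2

theorem Ultrafilter.exists_iUnion_two_mul_add_notMem {α : Type*} (U : Ultrafilter α)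
    {B : ℕ → Set α} (hB : Pairwise (Disjoint on B)) : ∃ i, ⋃ k, B (2 * k + i) ∉ U := by
  by_contra! hU
  have hdisj : Disjoint (⋃ k, B (2 * k + 0)) (⋃ k, B (2 * k + 1)) :=
    disjoint_iUnion_left.2 fun j => disjoint_iUnion_right.2 fun k => hB (by omega)
  exact U.empty_notMem (hdisj.inter_eq ▸ inter_mem (hU 0) (hU 1))

/-- For a free ultrafilter `U` on `ℕ`, there is no sequence of (countably
additive) probability measures `μ n` on `ℕ` with `μ n S → 1` for `S ∈ U` and `μ n S → 0`
for `S ∉ U`. -/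
theorem no_seq_of_measures_tendsto_ultrafilter_charge
    (U : Ultrafilter ℕ) (hU : (U : Filter ℕ) ≤ Filter.cofinite) :
    ¬ ∃ μ : ℕ → Measure ℕ,
        (∀ n, IsProbabilityMeasure (μ n)) ∧
        (∀ S : Set ℕ,
          (S ∈ U → Tendsto (fun n => μ n S) atTop (𝓝 1)) ∧
          (S ∉ U → Tendsto (fun n => μ n S) atTop (𝓝 0))) := by
  rintro ⟨μ, -, hμ⟩
  have hIci (a : ℕ) : ∀ᶠ n in atTop, (1 / 2 : ℝ≥0∞) < μ n (Ici a) :=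
    ((hμ _).1 (hU (Nat.cofinite_eq_atTop ▸ Ici_mem_atTop a))).eventually_const_lt (by norm_num)
  obtain ⟨n, N, hn, hN, hblock⟩ := exists_strictMono_lt_measure_Ico hIci
  obtain ⟨i, hi⟩ := U.exists_iUnion_two_mul_add_notMem hN.pairwise_disjoint_on_Ico_succ
  have hsub : StrictMono fun k => n (2 * k + i) := hn.comp fun _ _ h => by omega
  obtain ⟨k, hk⟩ := ((((hμ _).2 hi).comp hsub.tendsto_atTop).eventually_lt_const
    (by norm_num : (0 : ℝ≥0∞) < 1 / 2)).exists
  exact (hblock _).not_gt (hk.trans_le' (measure_mono (subset_iUnion_of_subset k subset_rfl)))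
end

section
/- Let U be a free (nonprincipal) ultrafilter on ℕ. Then there is no sequence (μ_n)_{n∈ℕ} of Borel probability measures on ℝ with the property that for every bounded continuous f : ℝ → ℝ and every L ∈ ℝ, if the sequence k ↦ f(k) tends to L along U then ∫ f dμ_n → L as n → ∞. -/
/-!
Test the limit against the bumps `natBump A`, of height one at the naturals in `A`. The numbers
`ν n A = ∫ natBump A ∂μ n` are monotone and subadditive in `A` and must tend to `1` or `0`
according as `A ∈ U` or not; in particular all mass escapes every initial segment `[0, m]`, while
each single `μ n` has tails tending to zero. A gliding hump then produces `n₁ < n₂ < ⋯` and blocks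
`(mᵢ, mᵢ₊₁]` carrying most of the mass of `μ nᵢ₊₁`; the union `A` of every other block has
`ν n A` alternately `≥ 5/8` and `≤ 1/4`, so `ν n A` has no limit at all.
-/

open MeasureTheory Filter Topology Metric Set
open scoped NNReal BoundedContinuousFunction

lemma thickenedIndicator_union_le_s8 {α : Type*} [PseudoEMetricSpace α] {δ : ℝ} (δ_pos : 0 < δ)
    (E F : Set α) (x : α) :
    thickenedIndicator δ_pos (E ∪ F) x ≤
      thickenedIndicator δ_pos E x + thickenedIndicator δ_pos F x := by
  simp only [thickenedIndicator_apply, thickenedIndicatorAux, infEDist_union]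
  rcases le_total (infEDist x E) (infEDist x F) with h | h
  · rw [min_eq_left h]; exact le_self_add
  · rw [min_eq_right h]; exact le_add_self

noncomputable def natBump (s : Set ℕ) : ℝ →ᵇ ℝ≥0 :=
  thickenedIndicator zero_lt_one (((↑) : ℕ → ℝ) '' s)

lemma natBump_natCast (s : Set ℕ) (k : ℕ) : (natBump s k : ℝ) = s.indicator (1 : ℕ → ℝ) k := by
  by_cases hk : k ∈ s
  · simp [natBump, thickenedIndicator_one _ _ (mem_image_of_mem _ hk), hk]
  · rw [indicator_of_notMem hk, natBump, thickenedIndicator_zero]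
    · rfl
    rw [mem_thickening_iff]
    rintro ⟨_, ⟨a, ha, rfl⟩, hlt⟩
    exact (Nat.pairwise_one_le_dist (ne_of_mem_of_not_mem ha hk).symm).not_gt hlt

lemma eventually_natBump_Ioi_eq_zero (x : ℝ) : ∀ᶠ m in atTop, natBump (Ioi m) x = 0 := by
  filter_upwards [eventually_ge_atTop ⌈x⌉₊] with m hm
  refine thickenedIndicator_zero _ _ ?_
  rw [mem_thickening_iff]
  rintro ⟨_, ⟨a, ha, rfl⟩, hlt⟩
  have hxa : x + 1 ≤ a := by
    have : (m : ℝ) + 1 ≤ a := by exact_mod_cast Nat.succ_le_of_lt ha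
    linarith [Nat.le_ceil x, (Nat.cast_le (α := ℝ)).2 hm]
  rw [Real.dist_eq, abs_sub_comm, abs_of_nonneg (by linarith)] at hlt
  linarith

lemma natBump_le_one (s : Set ℕ) (x : ℝ) : natBump s x ≤ 1 :=
  thickenedIndicator_le_one _ _ x

lemma tendsto_natBump_of_mem {l : Filter ℕ} {s : Set ℕ} (hs : s ∈ l) :
    Tendsto (fun k : ℕ => (natBump s k : ℝ)) l (𝓝 1) :=
  tendsto_const_nhds.congr' <| mem_of_superset hs fun k hk => by simp [natBump_natCast, hk]

lemma tendsto_natBump_of_compl_mem {l : Filter ℕ} {s : Set ℕ} (hs : sᶜ ∈ l) :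
    Tendsto (fun k : ℕ => (natBump s k : ℝ)) l (𝓝 0) :=
  tendsto_const_nhds.congr' <| mem_of_superset hs fun k hk => by
    simp [natBump_natCast, indicator_of_notMem hk]

section IntegralNatBump

variable (μ : Measure ℝ) [IsFiniteMeasure μ]

lemma integrable_natBump (s : Set ℕ) : Integrable (fun x => (natBump s x : ℝ)) μ :=
  BoundedContinuousFunction.integrable_of_nnreal μ (natBump s)

lemma monotone_integral_natBump : Monotone fun s => ∫ x, (natBump s x : ℝ) ∂μ :=
  fun _ _ hst => integral_mono (integrable_natBump μ _) (integrable_natBump μ _) fun x =>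
    NNReal.coe_le_coe.2 (thickenedIndicator_subset _ (image_mono hst) x)

lemma integral_natBump_union_le (s t : Set ℕ) :
    ∫ x, (natBump (s ∪ t) x : ℝ) ∂μ ≤ ∫ x, (natBump s x : ℝ) ∂μ + ∫ x, (natBump t x : ℝ) ∂μ := by
  rw [← integral_add (integrable_natBump μ s) (integrable_natBump μ t)]
  refine integral_mono (integrable_natBump μ _)
    ((integrable_natBump μ s).add (integrable_natBump μ t)) fun x => ?_
  rw [natBump, image_union]
  exact_mod_cast thickenedIndicator_union_le_s8 _ _ _ x

lemma tendsto_integral_natBump_Ioi :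
    Tendsto (fun m : ℕ => ∫ x, (natBump (Ioi m) x : ℝ) ∂μ) atTop (𝓝 0) := by
  have := tendsto_integral_of_dominated_convergence (μ := μ)
    (F := fun m x => (natBump (Ioi m) x : ℝ)) (f := fun _ => 0) (fun _ => 1)
    (fun m => (integrable_natBump μ (Ioi m)).aestronglyMeasurable) (integrable_const 1)
    (fun m => ae_of_all _ fun x => by simpa using natBump_le_one _ x)
    (ae_of_all _ fun x => tendsto_const_nhds.congr' <|
      (eventually_natBump_Ioi_eq_zero x).mono fun m hm => by simp [hm])
  simpa using this

end IntegralNatBump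

lemma iUnion_Ioc_even_subset {α : Type*} [Preorder α] {m : ℕ → α} (hm : Monotone m) (i : ℕ) :
    ⋃ j, Ioc (m (2 * j)) (m (2 * j + 1)) ⊆ Iic (m (2 * i + 1)) ∪ Ioi (m (2 * i + 2)) := by
  refine iUnion_subset fun j k hk => ?_
  rcases le_or_gt j i with hji | hij
  · exact Or.inl (hk.2.trans (hm (by omega)))
  · exact Or.inr ((hm (by omega)).trans_lt hk.1)

section GlidingHump

variable {ν : ℕ → Set ℕ → ℝ}

lemma exists_hump (hsub : ∀ n s t, ν n (s ∪ t) ≤ ν n s + ν n t)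
    (huniv : Tendsto (fun n => ν n univ) atTop (𝓝 1))
    (hIic : ∀ m, Tendsto (fun n => ν n (Iic m)) atTop (𝓝 0))
    (hIoi : ∀ n, Tendsto (fun m => ν n (Ioi m)) atTop (𝓝 0))
    {ε : ℝ} (hε : 0 < ε) (N m : ℕ) :
    ∃ n > N, ∃ m' > m,
      ν n (Iic m) ≤ ε ∧ 1 - 3 * ε ≤ ν n (Ioc m m') ∧ ν n (Ioi m') ≤ ε := by
  obtain ⟨n, hnN, hn_univ, hn_Iic⟩ := ((eventually_gt_atTop N).and
    ((huniv.eventually (eventually_ge_nhds (by linarith : 1 - ε < 1))).and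
      ((hIic m).eventually (eventually_le_nhds hε)))).exists
  obtain ⟨m', hm'm, hm'_Ioi⟩ := ((eventually_gt_atTop m).and
    ((hIoi n).eventually (eventually_le_nhds hε))).exists
  refine ⟨n, hnN, m', hm'm, hn_Iic, ?_, hm'_Ioi⟩
  have hcover : univ = (Iic m ∪ Ioc m m') ∪ Ioi m' := by
    rw [Iic_union_Ioc_eq_Iic hm'm.le, Iic_union_Ioi]
  have hsplit := calc ν n univ
      _ = ν n ((Iic m ∪ Ioc m m') ∪ Ioi m') := by rw [hcover]
      _ ≤ ν n (Iic m ∪ Ioc m m') + ν n (Ioi m') := hsub _ _ _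
      _ ≤ ν n (Iic m) + ν n (Ioc m m') + ν n (Ioi m') := by grw [hsub]
  linarith

lemma exists_seq_humps (hsub : ∀ n s t, ν n (s ∪ t) ≤ ν n s + ν n t)
    (huniv : Tendsto (fun n => ν n univ) atTop (𝓝 1))
    (hIic : ∀ m, Tendsto (fun n => ν n (Iic m)) atTop (𝓝 0))
    (hIoi : ∀ n, Tendsto (fun m => ν n (Ioi m)) atTop (𝓝 0))
    {ε : ℝ} (hε : 0 < ε) :
    ∃ n m : ℕ → ℕ, StrictMono n ∧ StrictMono m ∧ ∀ i,
      ν (n (i + 1)) (Iic (m i)) ≤ ε ∧ 1 - 3 * ε ≤ ν (n (i + 1)) (Ioc (m i) (m (i + 1))) ∧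
        ν (n (i + 1)) (Ioi (m (i + 1))) ≤ ε := by
  choose! N' hN' M' hM' hhump using fun q : ℕ × ℕ => exists_hump hsub huniv hIic hIoi hε q.1 q.2
  set p : ℕ → ℕ × ℕ := fun i => (fun q => (N' q, M' q))^[i] (0, 0)
  have hp (i : ℕ) : p (i + 1) = (N' (p i), M' (p i)) := Function.iterate_succ_apply' _ _ _
  refine ⟨fun i => (p i).1, fun i => (p i).2, strictMono_nat_of_lt_succ fun i => ?_,
    strictMono_nat_of_lt_succ fun i => ?_, fun i => ?_⟩
  · rw [hp]; exact hN' _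
  · rw [hp]; exact hM' _
  · simp only [hp]; exact hhump _

theorem exists_forall_not_tendsto_of_mass_escapes (hmono : ∀ n, Monotone (ν n))
    (hsub : ∀ n s t, ν n (s ∪ t) ≤ ν n s + ν n t)
    (huniv : Tendsto (fun n => ν n univ) atTop (𝓝 1))
    (hIic : ∀ m, Tendsto (fun n => ν n (Iic m)) atTop (𝓝 0))
    (hIoi : ∀ n, Tendsto (fun m => ν n (Ioi m)) atTop (𝓝 0)) :
    ∃ A : Set ℕ, ∀ L, ¬ Tendsto (fun n => ν n A) atTop (𝓝 L) := by
  obtain ⟨n, m, hn, hm, hhump⟩ :=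
    exists_seq_humps hsub huniv hIic hIoi (by norm_num : (0 : ℝ) < 1 / 8)
  refine ⟨⋃ j, Ioc (m (2 * j)) (m (2 * j + 1)), fun L hL => ?_⟩
  have hodd : Tendsto (fun i => n (2 * i + 1)) atTop atTop :=
    (hn.comp fun a b h => by omega).tendsto_atTop
  have heven : Tendsto (fun i => n (2 * i + 2)) atTop atTop :=
    (hn.comp fun a b h => by omega).tendsto_atTop
  have hlower : 5 / 8 ≤ L := ge_of_tendsto' (hL.comp hodd) fun i => by
    have hblock := hmono (n (2 * i + 1))
      (subset_iUnion (fun j => Ioc (m (2 * j)) (m (2 * j + 1))) i)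
    simp only [Function.comp_apply]
    linarith [(hhump (2 * i)).2.1]
  have hupper : L ≤ 1 / 4 := le_of_tendsto' (hL.comp heven) fun i => by
    have hcover := hmono (n (2 * i + 2)) (iUnion_Ioc_even_subset hm.monotone i)
    have hsplit := hsub (n (2 * i + 2)) (Iic (m (2 * i + 1))) (Ioi (m (2 * i + 2)))
    obtain ⟨hIic_small, -, hIoi_small⟩ := hhump (2 * i + 1)
    simp only [Function.comp_apply]
    linarith
  linarith

end GlidingHump

/-- Example 5.11, Laczkovich: For a free ultrafilter `U` on `ℕ`, there is no
sequence of Borel probability measures `μ n` on `ℝ` such that `∫ f dμ n → L` whenever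
`k ↦ f k` tends to `L` along `U`, for every bounded continuous `f : ℝ → ℝ`. -/
theorem no_weak_limit_to_ultrafilter_charge_on_real_line
    (U : Ultrafilter ℕ) (hU : (U : Filter ℕ) ≤ Filter.cofinite) :
    ¬ ∃ μ : ℕ → Measure ℝ,
        (∀ n, IsProbabilityMeasure (μ n)) ∧
        (∀ f : ℝ → ℝ, Continuous f → (∃ C : ℝ, ∀ x, |f x| ≤ C) →
          ∀ L : ℝ, Tendsto (fun k : ℕ => f k) (U : Filter ℕ) (𝓝 L) →
            Tendsto (fun n => ∫ x, f x ∂(μ n)) atTop (𝓝 L)) := by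
  rintro ⟨μ, hμ, hconv⟩
  have hlim (s : Set ℕ) {L : ℝ} (hs : Tendsto (fun k : ℕ => (natBump s k : ℝ)) U (𝓝 L)) :
      Tendsto (fun n => ∫ x, (natBump s x : ℝ) ∂μ n) atTop (𝓝 L) :=
    hconv _ (NNReal.continuous_coe.comp (natBump s).continuous)
      ⟨1, fun x => by simpa using natBump_le_one s x⟩ L hs
  obtain ⟨A, hA⟩ := exists_forall_not_tendsto_of_mass_escapes
    (ν := fun n s => ∫ x, (natBump s x : ℝ) ∂μ n)
    (fun n => monotone_integral_natBump (μ n)) (fun n => integral_natBump_union_le (μ n))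
    (hlim _ (tendsto_natBump_of_mem univ_mem))
    (fun m => hlim _ (tendsto_natBump_of_compl_mem (hU (finite_Iic m).compl_mem_cofinite)))
    (fun n => tendsto_integral_natBump_Ioi (μ n))
  by_cases hAU : A ∈ U
  · exact hA 1 (hlim A (tendsto_natBump_of_mem hAU))
  · exact hA 0 (hlim A (tendsto_natBump_of_compl_mem (U.compl_mem_iff_notMem.2 hAU)))
end

section
/- Let U be a free (nonprincipal) ultrafilter on ℕ and let (μ_n)_{n∈ℕ} be Borel probability measures on ℝ such that for every bounded continuous f : ℝ → ℝ and every L ∈ ℝ, if the sequence k ↦ f(k) tends to L along U then ∫ f dμ_n → L as n → ∞. Then for every integer k ≥ 1 and every real d with 0 < d < 1, μ_n([k − d, k + d]) → 0 as n → ∞. -/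
/-! A continuous `f : ℝ → [0, 1]` equal to `1` on `[k - d, k + d]` and vanishing outside
`(k - 1, k + 1)` vanishes at every natural number other than `k`, so it tends to `0` along the
free ultrafilter `U`. Hence `∫ f dμ n → 0`, and these integrals dominate `μ n [k - d, k + d]`. -/

open MeasureTheory Filter Topology

section MarkovBound

variable {α : Type*} [MeasurableSpace α]

theorem measure_le_ofReal_integral_of_one_le {μ : Measure α} {f : α → ℝ} {s : Set α}
    (hf : Integrable f μ) (hf0 : 0 ≤ᵐ[μ] f) (hs : ∀ x ∈ s, 1 ≤ f x) :
    μ s ≤ ENNReal.ofReal (∫ x, f x ∂μ) :=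
  calc μ s ≤ μ {x | 1 ≤ ENNReal.ofReal (f x)} :=
        measure_mono fun x hx => ENNReal.one_le_ofReal.2 (hs x hx)
    _ = 1 * μ {x | 1 ≤ ENNReal.ofReal (f x)} := (one_mul _).symm
    _ ≤ ∫⁻ x, ENNReal.ofReal (f x) ∂μ :=
        mul_meas_ge_le_lintegral₀ hf.aemeasurable.ennreal_ofReal 1
    _ = ENNReal.ofReal (∫ x, f x ∂μ) := (ofReal_integral_eq_lintegral_ofReal hf hf0).symm

theorem tendsto_measure_nhds_zero_of_tendsto_integral {ι : Type*} {l : Filter ι}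
    {μ : ι → Measure α} {f : α → ℝ} {s : Set α} (hf : ∀ i, Integrable f (μ i)) (hf0 : 0 ≤ f)
    (hs : ∀ x ∈ s, 1 ≤ f x) (h : Tendsto (fun i => ∫ x, f x ∂μ i) l (𝓝 0)) :
    Tendsto (fun i => μ i s) l (𝓝 0) :=
  tendsto_of_tendsto_of_tendsto_of_le_of_le tendsto_const_nhds
    (by simpa using ENNReal.tendsto_ofReal h) (fun _ => zero_le)
    fun i => measure_le_ofReal_integral_of_one_le (hf i) (ae_of_all _ hf0) hs

end MarkovBound

/-- first intermediate claim in Example 5.11: if the Borel probability measures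
`μ n` on `ℝ` converge weakly (against bounded continuous functions) to the charge determined
by the free ultrafilter `U`, then `μ n [k - d, k + d] → 0` for every integer `k ≥ 1` and
every `0 < d < 1`. -/
theorem tendsto_measure_Icc_zero_of_weak_limit_ultrafilter_charge
    (U : Ultrafilter ℕ) (hU : (U : Filter ℕ) ≤ Filter.cofinite)
    (μ : ℕ → Measure ℝ) (hprob : ∀ n, IsProbabilityMeasure (μ n))
    (hconv : ∀ f : ℝ → ℝ, Continuous f → (∃ C : ℝ, ∀ x, |f x| ≤ C) →
      ∀ L : ℝ, Tendsto (fun k : ℕ => f k) (U : Filter ℕ) (𝓝 L) →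
        Tendsto (fun n => ∫ x, f x ∂(μ n)) atTop (𝓝 L)) :
    ∀ k : ℕ, 1 ≤ k → ∀ d : ℝ, 0 < d → d < 1 →
      Tendsto (fun n => μ n (Set.Icc ((k : ℝ) - d) ((k : ℝ) + d))) atTop (𝓝 0) := by
  intro k _ d _ hd1
  have hIcc_ball : Set.Icc ((k : ℝ) - d) (k + d) ⊆ Metric.ball (k : ℝ) 1 := by
    rw [← Real.closedBall_eq_Icc]; exact Metric.closedBall_subset_ball hd1
  obtain ⟨f, hf_one, hf_zero, hf_supp, hf_mem⟩ :=
    exists_continuous_one_zero_of_isCompact (X := ℝ) isCompact_Icc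
      Metric.isOpen_ball.isClosed_compl (disjoint_compl_right_iff.2 hIcc_ball)
  have hf_nat : ∀ n : ℕ, n ≠ k → f n = 0 := fun n hn =>
    hf_zero (by simpa [Nat.dist_cast_real] using Nat.pairwise_one_le_dist hn)
  have hf_U : Tendsto (fun n : ℕ => f n) U (𝓝 0) := tendsto_const_nhds.congr'
    (Eventually.mono (hU (eventually_cofinite_ne k)) fun n hn => (hf_nat n hn).symm)
  have hf_bdd : ∃ C, ∀ x, |f x| ≤ C :=
    ⟨1, fun x => abs_le.2 ⟨by linarith [(hf_mem x).1], (hf_mem x).2⟩⟩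
  refine tendsto_measure_nhds_zero_of_tendsto_integral (fun n => ?_) (fun x => (hf_mem x).1)
    (fun x hx => (hf_one hx).ge) (hconv f f.continuous hf_bdd 0 hf_U)
  have := hprob n
  exact f.continuous.integrable_of_hasCompactSupport hf_supp
end

section
/- Let U be a free (nonprincipal) ultrafilter on ℕ and let (μ_n)_{n∈ℕ} be Borel probability measures on ℝ such that for every bounded continuous f : ℝ → ℝ and every L ∈ ℝ, if the sequence k ↦ f(k) tends to L along U then ∫ f dμ_n → L as n → ∞. Then μ_n(ℕ) → 1 as n → ∞, where ℕ is regarded as the set {0, 1, 2, …} of natural numbers inside ℝ. -/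
open MeasureTheory Filter Topology Set Metric

/-!
Testing against continuous functions that vanish near `+∞` shows that the mass of `μ n` escapes
to `+∞`. If `μ n (ℝ \ ℕ)` did not tend to `0`, we could pick `n j → ∞` with
`μ (n j) (ℝ \ ℕ) ≥ ε`, `μ (n j) (Iic j) < ε / 4` and `δ j > 0` such that `μ (n j)` gives mass
`> ε / 2` to the points at distance `> δ j` from `ℕ`. For a continuous `ψ ≥ 1 / δ j` on
`[j, ∞)`, the function `F = min 1 (|ψ| * infDist · ℕ)` is continuous, bounded and vanishes on `ℕ`,
so `∫ F ∂μ n → 0` by hypothesis; yet `∫ F ∂μ (n j) ≥ ε / 4`.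
-/

theorem abs_le_one_of_mem_Icc {a : ℝ} (ha : a ∈ Icc 0 1) : |a| ≤ 1 :=
  abs_le.2 ⟨by linarith [ha.1], ha.2⟩

theorem measureReal_le_integral_of_eqOn_one {X : Type*} [MeasurableSpace X] {ν : Measure X}
    [IsFiniteMeasure ν] {f : X → ℝ} (hf : AEStronglyMeasurable f ν) (hf01 : ∀ x, f x ∈ Icc 0 1)
    {s : Set X} (hs : EqOn f 1 s) : ν.real s ≤ ∫ x, f x ∂ν := by
  have hint : Integrable f ν :=
    .of_bound hf 1 (ae_of_all _ fun x => by
      rw [Real.norm_of_nonneg (hf01 x).1]; exact (hf01 x).2)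
  calc ν.real s ≤ ν.real {x | 1 ≤ f x} := measureReal_mono fun x hx => (hs hx).ge
    _ = 1 * ν.real {x | 1 ≤ f x} := (one_mul _).symm
    _ ≤ ∫ x, f x ∂ν := mul_meas_ge_le_integral_of_nonneg (ae_of_all _ fun x => (hf01 x).1) hint 1

theorem exists_continuous_forall_le_of_natCast_le (b : ℕ → ℝ) :
    ∃ ψ : C(ℝ, ℝ), ∀ (j : ℕ) (x : ℝ), (j : ℝ) ≤ x → b j ≤ ψ x := by
  have hconv : ∀ x : ℝ, Convex ℝ {y | ∀ j : ℕ, (j : ℝ) ≤ x → b j ≤ y} := fun x => by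
    simp only [ofPred_forall]
    exact convex_iInter fun j => convex_iInter fun _ => convex_Ici (b j)
  suffices ∀ x : ℝ, ∃ c : ℝ, ∀ᶠ y in 𝓝 x, ∀ j : ℕ, (j : ℝ) ≤ y → b j ≤ c by
    obtain ⟨ψ, hψ⟩ := exists_continuous_forall_mem_convex_of_local_const hconv this
    exact ⟨ψ, fun j x hj => hψ x j hj⟩
  intro x
  refine ⟨∑ j ∈ Finset.range (⌈x⌉₊ + 1), |b j|, ?_⟩
  filter_upwards [gt_mem_nhds (lt_add_one x)] with y hy j hj
  have hj' : j ∈ Finset.range (⌈x⌉₊ + 1) := by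
    rw [Finset.mem_range, ← Nat.cast_lt (α := ℝ)]; push_cast
    linarith [Nat.le_ceil x]
  exact (le_abs_self _).trans (Finset.single_le_sum (fun i _ => abs_nonneg (b i)) hj')

theorem exists_pos_lt_measureReal_setOf_lt_infDist {X : Type*} [PseudoMetricSpace X]
    [MeasurableSpace X] (ν : Measure X) [IsFiniteMeasure ν] {E : Set X} (hE : IsClosed E)
    (hne : E.Nonempty) {ε : ℝ} (h : ε < ν.real Eᶜ) : ∃ δ > 0, ε < ν.real {x | δ < infDist x E} := by
  have hmono : Monotone fun k : ℕ => {x | 1 / ((k : ℝ) + 1) < infDist x E} := by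
    intro k l hkl x hx
    simp only [mem_ofPred_eq] at hx ⊢
    exact (Nat.one_div_le_one_div hkl).trans_lt hx
  have hunion : ⋃ k : ℕ, {x | 1 / ((k : ℝ) + 1) < infDist x E} = Eᶜ := by
    ext x
    simp only [mem_iUnion, mem_ofPred_eq, mem_compl_iff, hE.notMem_iff_infDist_pos hne]
    exact ⟨fun ⟨k, hk⟩ => Nat.one_div_pos_of_nat.trans hk, exists_nat_one_div_lt⟩
  have hlim :=
    (ENNReal.tendsto_toReal (measure_ne_top ν _)).comp (tendsto_measure_iUnion_atTop hmono)
  rw [hunion] at hlim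
  obtain ⟨k, hk⟩ := (hlim.eventually (lt_mem_nhds h)).exists
  exact ⟨1 / ((k : ℝ) + 1), Nat.one_div_pos_of_nat, hk⟩

theorem exists_continuous_eqOn_zero_eqOn_one_infDist_gt (E : Set ℝ) {δ : ℕ → ℝ}
    (hδ : ∀ j, 0 < δ j) : ∃ F : ℝ → ℝ, Continuous F ∧ (∀ x, F x ∈ Icc 0 1) ∧ EqOn F 0 E ∧
      ∀ j : ℕ, EqOn F 1 ({x | δ j < infDist x E} \ Iic (j : ℝ)) := by
  obtain ⟨ψ, hψ⟩ := exists_continuous_forall_le_of_natCast_le fun j => (δ j)⁻¹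
  refine ⟨fun x => min 1 (|ψ x| * infDist x E),
    continuous_const.min ((continuous_abs.comp ψ.continuous).mul (continuous_infDist_pt E)),
    fun x => ⟨le_min zero_le_one (mul_nonneg (abs_nonneg _) infDist_nonneg), min_le_left _ _⟩,
    fun x hx => by simp [infDist_zero_of_mem hx], fun j x ⟨hx, hjx⟩ => min_eq_left ?_⟩
  calc (1 : ℝ) = (δ j)⁻¹ * δ j := (inv_mul_cancel₀ (hδ j).ne').symm
    _ ≤ |ψ x| * infDist x E := mul_le_mul ((hψ j x (not_le.1 hjx).le).trans (le_abs_self _))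
        (le_of_lt hx) (hδ j).le (abs_nonneg _)

theorem tendsto_measureReal_Iic_of_tendsto_integral {μ : ℕ → Measure ℝ}
    [∀ n, IsFiniteMeasure (μ n)]
    (h : ∀ f : ℝ → ℝ, Continuous f → (∃ C, ∀ x, |f x| ≤ C) → (∀ᶠ x in atTop, f x = 0) →
      Tendsto (fun n => ∫ x, f x ∂μ n) atTop (𝓝 0))
    (R : ℝ) : Tendsto (fun n => (μ n).real (Iic R)) atTop (𝓝 0) := by
  obtain ⟨f, hf0, hf1, hf01⟩ := exists_continuous_zero_one_of_isClosed isClosed_Ici isClosed_Iic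
    (Iic_disjoint_Ici.2 (lt_add_one R).not_ge).symm
  have hint := h f f.continuous ⟨1, fun x => abs_le_one_of_mem_Icc (hf01 x)⟩
    (eventually_ge_atTop (R + 1) |>.mono fun x hx => hf0 hx)
  exact tendsto_of_tendsto_of_tendsto_of_le_of_le tendsto_const_nhds hint
    (fun n => measureReal_nonneg)
    (fun n => measureReal_le_integral_of_eqOn_one f.continuous.aestronglyMeasurable hf01 hf1)

theorem tendsto_measureReal_compl_of_tendsto_integral {μ : ℕ → Measure ℝ}
    [∀ n, IsFiniteMeasure (μ n)] {E : Set ℝ} (hE : IsClosed E) (hne : E.Nonempty)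
    (hescape : ∀ R, Tendsto (fun n => (μ n).real (Iic R)) atTop (𝓝 0))
    (hvanish : ∀ f : ℝ → ℝ, Continuous f → (∃ C, ∀ x, |f x| ≤ C) → EqOn f 0 E →
      Tendsto (fun n => ∫ x, f x ∂μ n) atTop (𝓝 0)) :
    Tendsto (fun n => (μ n).real Eᶜ) atTop (𝓝 0) := by
  refine tendsto_order.2 ⟨fun a ha => .of_forall fun n => ha.trans_le measureReal_nonneg,
    fun ε hε => ?_⟩
  by_contra hfreq
  simp only [not_eventually, not_lt] at hfreq
  have hsub : ∀ j : ℕ, ∃ n ≥ j, ε ≤ (μ n).real Eᶜ ∧ (μ n).real (Iic (j : ℝ)) < ε / 4 := fun j =>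
    ((hfreq.and_eventually ((hescape j).eventually (gt_mem_nhds (by positivity)))).and_eventually
      (eventually_ge_atTop j)).exists.imp fun n hn => ⟨hn.2, hn.1⟩
  choose n hn_ge hn_large hn_Iic using hsub
  have hδ : ∀ j, ∃ δ > 0, ε / 2 < (μ (n j)).real {x | δ < infDist x E} := fun j =>
    exists_pos_lt_measureReal_setOf_lt_infDist _ hE hne (by linarith [hn_large j])
  choose δ hδ_pos hδ using hδ
  obtain ⟨F, hF, hF01, hF0, hF1⟩ := exists_continuous_eqOn_zero_eqOn_one_infDist_gt E hδ_pos
  have hlarge : ∀ j, ε / 4 ≤ ∫ x, F x ∂μ (n j) := fun j => calc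
    ε / 4 ≤ (μ (n j)).real {x | δ j < infDist x E} - (μ (n j)).real (Iic (j : ℝ)) := by
      linarith [hδ j, hn_Iic j]
    _ ≤ (μ (n j)).real ({x | δ j < infDist x E} \ Iic (j : ℝ)) := le_measureReal_sdiff
    _ ≤ ∫ x, F x ∂μ (n j) :=
      measureReal_le_integral_of_eqOn_one hF.aestronglyMeasurable hF01 (hF1 j)
  have hsmall := (hvanish F hF ⟨1, fun x => abs_le_one_of_mem_Icc (hF01 x)⟩ hF0).comp
    (tendsto_atTop_mono hn_ge tendsto_id)
  obtain ⟨j, hj⟩ := (hsmall.eventually (gt_mem_nhds (by positivity : 0 < ε / 4))).exists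
  exact (hlarge j).not_gt hj

/-- second intermediate claim in Example 5.11: if the Borel probability
measures `μ n` on `ℝ` converge weakly (against bounded continuous functions) to the charge
determined by the free ultrafilter `U`, then `μ n (ℕ) → 1`, where `ℕ ⊆ ℝ` is the range of
the natural number cast. -/
theorem tendsto_measure_nat_one_of_weak_limit_ultrafilter_charge
    (U : Ultrafilter ℕ) (hU : (U : Filter ℕ) ≤ Filter.cofinite)
    (μ : ℕ → Measure ℝ) (hprob : ∀ n, IsProbabilityMeasure (μ n))
    (hconv : ∀ f : ℝ → ℝ, Continuous f → (∃ C : ℝ, ∀ x, |f x| ≤ C) →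
      ∀ L : ℝ, Tendsto (fun k : ℕ => f k) (U : Filter ℕ) (𝓝 L) →
        Tendsto (fun n => ∫ x, f x ∂(μ n)) atTop (𝓝 L)) :
    Tendsto (fun n => μ n (Set.range ((↑) : ℕ → ℝ))) atTop (𝓝 1) := by
  set A : Set ℝ := range ((↑) : ℕ → ℝ)
  have hA : IsClosed A := Nat.isClosedEmbedding_coe_real.isClosed_range
  have hescape := tendsto_measureReal_Iic_of_tendsto_integral fun f hf hC hf0 =>
    hconv f hf hC 0 <| tendsto_const_nhds.congr' <| hU <| by
      rw [Nat.cofinite_eq_atTop]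
      exact (tendsto_natCast_atTop_atTop.eventually hf0).mono fun k hk => hk.symm
  have hcompl := tendsto_measureReal_compl_of_tendsto_integral hA (range_nonempty _) hescape
    fun f hf hC hf0 => hconv f hf hC 0 <|
      tendsto_const_nhds.congr fun k => (hf0 (mem_range_self k)).symm
  have hreal : Tendsto (fun n => (μ n).real A) atTop (𝓝 1) := by
    simpa [probReal_compl_eq_one_sub hA.measurableSet] using
      (tendsto_const_nhds (x := (1 : ℝ))).sub hcompl
  exact (ENNReal.tendsto_toReal_iff (fun n => measure_ne_top _ _) ENNReal.one_ne_top).1 hreal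
end

section
/- Let U be a free (nonprincipal) ultrafilter on ℕ and let (μ_n)_{n∈ℕ} be Borel probability measures on ℝ such that for every bounded continuous f : ℝ → ℝ and every L ∈ ℝ, if the sequence k ↦ f(k) tends to L along U then ∫ f dμ_n → L as n → ∞. Then for every E ⊆ ℕ, the sequence μ_n(E) (with E viewed as a subset of ℝ) converges to 1 if E ∈ U and converges to 0 if E ∉ U. -/
/-!
The limit charge is the point mass of `U`, so by Urysohn's lemma a closed set `S` disjoint from
`A ⊆ ℕ` with `A ∈ U` has `μ n S → 0`: a continuous `f : ℝ → [0, 1]` equal to `1` on `S` and `0` on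
`A` satisfies `∫ f dμ n → 0`. Separating `E` from `Eᶜ` handles `E ∉ U`, and since `U` is free,
`μ n (Iic K) → 0`. The mass off `ℕ` tends to `0` as well: otherwise, for every `i` some `μ n` with
`n ≥ i` gives mass `ε / 2` to a closed set `C i ⊆ [i, ∞) \ ℕ`; the family `C` is locally finite,
so `⋃ i, C i` is a closed set disjoint from `ℕ`, contradicting the first step. For `E ∈ U`, the
complement of `E` in `ℝ` is covered by `Eᶜ` and `ℝ \ ℕ`.
-/

open MeasureTheory Filter Topology Set

theorem measure_le_ofReal_integral_of_one_le_s11 {X : Type*} [MeasurableSpace X] {μ : Measure X}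
    {f : X → ℝ} (hf_nonneg : 0 ≤ f) (hf_int : Integrable f μ) {S : Set X}
    (hS : ∀ x ∈ S, 1 ≤ f x) : μ S ≤ ENNReal.ofReal (∫ x, f x ∂μ) := by
  rw [ofReal_integral_eq_lintegral_ofReal hf_int (ae_of_all _ hf_nonneg)]
  calc μ S ≤ μ {x | 1 ≤ ENNReal.ofReal (f x)} := measure_mono fun x hx => by simpa using hS x hx
    _ ≤ ∫⁻ x, ENNReal.ofReal (f x) ∂μ := by
      simpa using mul_meas_ge_le_lintegral₀ hf_int.1.aemeasurable.ennreal_ofReal 1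

theorem locallyFinite_of_subset_Ici {ι X : Type*} [LinearOrder X] [TopologicalSpace X]
    [OrderTopology X] [NoMaxOrder X] {a : ι → X} (ha : Tendsto a cofinite atTop)
    {C : ι → Set X} (hC : ∀ i, C i ⊆ Ici (a i)) : LocallyFinite C := by
  intro x
  obtain ⟨b, hxb⟩ := exists_gt x
  have hdisj : ∀ᶠ i in cofinite, Disjoint (C i) (Iio b) := (ha.eventually_ge_atTop b).mono
    fun i hi => disjoint_left.2 fun y hy hyb => (hi.trans (hC i hy)).not_gt hyb
  refine ⟨Iio b, Iio_mem_nhds hxb, ?_⟩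
  simpa [not_disjoint_iff_nonempty_inter] using eventually_cofinite.1 hdisj

def WeakTendstoUltrafilterCharge (U : Filter ℕ) (μ : ℕ → Measure ℝ) : Prop :=
  ∀ f : ℝ → ℝ, Continuous f → (∃ C : ℝ, ∀ x, |f x| ≤ C) →
    ∀ L : ℝ, Tendsto (fun k : ℕ => f k) U (𝓝 L) → Tendsto (fun n => ∫ x, f x ∂(μ n)) atTop (𝓝 L)

namespace WeakTendstoUltrafilterCharge

variable {U : Filter ℕ} {μ : ℕ → Measure ℝ}

theorem tendsto_measure_zero (h : WeakTendstoUltrafilterCharge U μ)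
    [∀ n, IsFiniteMeasure (μ n)] {S : Set ℝ} (hS : IsClosed S) {A : Set ℕ} (hA : A ∈ U)
    (hSA : Disjoint S ((↑) '' A)) : Tendsto (fun n => μ n S) atTop (𝓝 0) := by
  obtain ⟨f, hfA, hfS, hf01⟩ := exists_continuous_zero_one_of_isClosed
    (Nat.isClosedEmbedding_coe_real.isClosedMap _ (isClosed_discrete A)) hS hSA.symm
  have hf_bdd : ∀ x, |f x| ≤ 1 := fun x => abs_le.2 ⟨by linarith [(hf01 x).1], (hf01 x).2⟩
  have hf_int : Tendsto (fun n => ∫ x, f x ∂μ n) atTop (𝓝 0) :=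
    h f f.continuous ⟨1, hf_bdd⟩ 0 <| tendsto_const_nhds.congr' <|
      eventually_of_mem hA fun k hk => (hfA (mem_image_of_mem _ hk)).symm
  refine tendsto_of_tendsto_of_tendsto_of_le_of_le tendsto_const_nhds
    (by simpa using ENNReal.tendsto_ofReal hf_int) (fun _ => zero_le) fun n => ?_
  exact measure_le_ofReal_integral_of_one_le_s11 (fun x => (hf01 x).1)
    (.of_bound f.continuous.aestronglyMeasurable 1 (ae_of_all _ hf_bdd)) fun x hx => (hfS hx).ge

theorem tendsto_measure_Iic (h : WeakTendstoUltrafilterCharge U μ) [∀ n, IsFiniteMeasure (μ n)]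
    (hU : U ≤ cofinite) (K : ℝ) : Tendsto (fun n => μ n (Iic K)) atTop (𝓝 0) := by
  have hA : {k : ℕ | K < k} ∈ U :=
    hU <| Nat.cofinite_eq_atTop ▸ tendsto_natCast_atTop_atTop.eventually_gt_atTop K
  refine h.tendsto_measure_zero isClosed_Iic hA ?_
  exact disjoint_left.2 fun x (hx : x ≤ K) ⟨k, (hk : K < k), hkx⟩ => (hkx ▸ hk).not_ge hx

theorem tendsto_measure_natCast_image_of_notMem {U : Ultrafilter ℕ}
    (h : WeakTendstoUltrafilterCharge U μ) [∀ n, IsFiniteMeasure (μ n)] {E : Set ℕ} (hE : E ∉ U) :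
    Tendsto (fun n => μ n ((↑) '' E)) atTop (𝓝 0) :=
  h.tendsto_measure_zero (Nat.isClosedEmbedding_coe_real.isClosedMap _ (isClosed_discrete E))
    (Ultrafilter.compl_mem_iff_notMem.2 hE)
    ((disjoint_image_iff Nat.cast_injective).2 disjoint_compl_right)

theorem tendsto_measure_compl_range_natCast (h : WeakTendstoUltrafilterCharge U μ)
    [∀ n, IsFiniteMeasure (μ n)] (hU : U ≤ cofinite) :
    Tendsto (fun n => μ n (range ((↑) : ℕ → ℝ))ᶜ) atTop (𝓝 0) := by
  set O := (range ((↑) : ℕ → ℝ))ᶜ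
  by_contra hne
  obtain ⟨ε, hε, hfreq⟩ : ∃ ε > 0, ∃ᶠ n in atTop, ε < μ n O := by
    simpa [ENNReal.tendsto_nhds_zero, frequently_atTop] using hne
  have hε2 : 0 < ε / 2 := ENNReal.half_pos hε.ne'
  have hbump : ∀ i : ℕ, ∃ n ≥ i, ∃ C ⊆ O ∩ Ici (i : ℝ), IsClosed C ∧ ε / 2 < μ n C := by
    intro i
    obtain ⟨n, hn, hO, hIic⟩ := (hfreq.and_eventually ((h.tendsto_measure_Iic hU i).eventually
      (gt_mem_nhds hε2))).forall_exists_of_atTop i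
    have hOi : ε / 2 < μ n (O ∩ Ici (i : ℝ)) := by
      by_contra! hle
      have hOle : μ n (O \ Ici (i : ℝ)) ≤ μ n (Iic (i : ℝ)) :=
        measure_mono fun x hx => show x ≤ i from (not_le.1 hx.2).le
      refine hO.not_ge ?_
      calc μ n O ≤ μ n (O ∩ Ici (i : ℝ)) + μ n (O \ Ici (i : ℝ)) :=
            measure_le_inter_add_sdiff _ _ _
        _ ≤ ε / 2 + ε / 2 := add_le_add hle (hOle.trans hIic.le)
        _ = ε := ENNReal.add_halves ε
    obtain ⟨C, hCO, hC, hCμ⟩ := ((countable_range _).measurableSet.compl.inter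
      measurableSet_Ici).exists_lt_isClosed_of_ne_top (measure_ne_top _ _) hOi
    exact ⟨n, hn, C, hCO, hC, hCμ⟩
  choose n hn C hCO hC hCμ using hbump
  have hlf : LocallyFinite C := locallyFinite_of_subset_Ici
    (Nat.cofinite_eq_atTop ▸ tendsto_natCast_atTop_atTop) fun i => (hCO i).trans inter_subset_right
  have hS : Tendsto (fun m => μ m (⋃ i, C i)) atTop (𝓝 0) :=
    h.tendsto_measure_zero (hlf.isClosed_iUnion hC) univ_mem <| by
      rw [image_univ]
      exact disjoint_compl_left.mono_left (iUnion_subset fun i => (hCO i).trans inter_subset_left)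
  obtain ⟨i, hi⟩ :=
    ((hS.comp (tendsto_atTop_mono hn tendsto_id)).eventually (gt_mem_nhds hε2)).exists
  exact (hCμ i).not_ge ((measure_mono (subset_iUnion C i)).trans hi.le)

theorem tendsto_measure_natCast_image_of_mem {U : Ultrafilter ℕ}
    (h : WeakTendstoUltrafilterCharge U μ) [∀ n, IsProbabilityMeasure (μ n)]
    (hU : (U : Filter ℕ) ≤ cofinite) {E : Set ℕ} (hE : E ∈ U) :
    Tendsto (fun n => μ n ((↑) '' E)) atTop (𝓝 1) := by
  have hcompl : Tendsto (fun n => μ n ((↑) '' E)ᶜ) atTop (𝓝 0) := by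
    have hsum := (h.tendsto_measure_natCast_image_of_notMem (E := Eᶜ)
      (Ultrafilter.compl_notMem_iff.2 hE)).add (h.tendsto_measure_compl_range_natCast hU)
    rw [add_zero] at hsum
    refine tendsto_of_tendsto_of_tendsto_of_le_of_le tendsto_const_nhds hsum (fun _ => zero_le)
      fun n => (measure_mono ?_).trans (measure_union_le _ _)
    intro x hx
    by_cases hx' : x ∈ range ((↑) : ℕ → ℝ)
    · obtain ⟨k, rfl⟩ := hx'
      exact .inl ⟨k, fun hk => hx ⟨k, hk, rfl⟩, rfl⟩
    · exact .inr hx'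
  have hmeas : MeasurableSet (((↑) : ℕ → ℝ) '' E)ᶜ := (E.to_countable.image _).measurableSet.compl
  have hsub := ENNReal.Tendsto.sub tendsto_const_nhds hcompl (.inl ENNReal.one_ne_top)
  rw [tsub_zero] at hsub
  exact hsub.congr fun n => by rw [← prob_compl_eq_one_sub hmeas, compl_compl]

end WeakTendstoUltrafilterCharge

/-- third intermediate claim in Example 5.11: if the Borel probability
measures `μ n` on `ℝ` converge weakly (against bounded continuous functions) to the charge
determined by the free ultrafilter `U`, then for every `E ⊆ ℕ` the sequence `μ n E`
converges to `1` if `E ∈ U` and to `0` if `E ∉ U`. -/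
theorem tendsto_measure_subsets_nat_of_weak_limit_ultrafilter_charge
    (U : Ultrafilter ℕ) (hU : (U : Filter ℕ) ≤ Filter.cofinite)
    (μ : ℕ → Measure ℝ) (hprob : ∀ n, IsProbabilityMeasure (μ n))
    (hconv : ∀ f : ℝ → ℝ, Continuous f → (∃ C : ℝ, ∀ x, |f x| ≤ C) →
      ∀ L : ℝ, Tendsto (fun k : ℕ => f k) (U : Filter ℕ) (𝓝 L) →
        Tendsto (fun n => ∫ x, f x ∂(μ n)) atTop (𝓝 L)) :
    ∀ E : Set ℕ,
      (E ∈ U → Tendsto (fun n => μ n (((↑) : ℕ → ℝ) '' E)) atTop (𝓝 1)) ∧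
      (E ∉ U → Tendsto (fun n => μ n (((↑) : ℕ → ℝ) '' E)) atTop (𝓝 0)) := fun _ =>
  ⟨WeakTendstoUltrafilterCharge.tendsto_measure_natCast_image_of_mem hconv hU,
    WeakTendstoUltrafilterCharge.tendsto_measure_natCast_image_of_notMem hconv⟩
end

section
/- Let X be a metric space, let ε > 0 and let y : ℕ → X satisfy d(y i, y j) > ε for all i ≠ j, and let U be a free (nonprincipal) ultrafilter on ℕ. Suppose (μ_n)_{n∈ℕ} are Borel probability measures on X with μ_n(range y) = 1 for all n, and such that for every bounded uniformly continuous f : X → ℝ and every L ∈ ℝ, if f ∘ y tends to L along U then ∫ f dμ_n → L as n → ∞. Then for every S ⊆ ℕ, the sequence μ_n(y '' S) converges to 1 if S ∈ U and converges to 0 if S ∉ U. -/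
/-!
The ε-separation of `y` makes every image `y '' S` closed and keeps `y i`, for `i ∉ S`, outside
the ε-thickening of `y '' S`. So the ε-thickened indicator of `y '' S`, a bounded Lipschitz
function, agrees with the indicator of `y '' S` on `range y`, which carries all the mass of each
`μ n`, while along `y` it is the indicator of `S`, whose limit along `U` is `1` or `0` according
as `S ∈ U` or not. The convergence hypothesis turns this into the limit of `μ n (y '' S)`.
-/

open MeasureTheory Filter Topology Metric Set

open scoped Classical in
theorem Ultrafilter.tendsto_indicator_const {ι M : Type*} [Zero M] [TopologicalSpace M]
    (U : Ultrafilter ι) (S : Set ι) (c : M) :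
    Tendsto (S.indicator fun _ => c) U (𝓝 (if S ∈ U then c else 0)) := by
  by_cases hS : S ∈ U
  · rw [if_pos hS]
    exact tendsto_const_nhds.congr' <| by
      filter_upwards [hS] with i hi using (indicator_of_mem hi fun _ => c).symm
  · rw [if_neg hS]
    exact tendsto_const_nhds.congr' <| by
      filter_upwards [U.compl_mem_iff_notMem.2 hS] with i hi using
        (indicator_of_notMem hi fun _ => c).symm

theorem MeasureTheory.integral_eq_measureReal_of_eqOn_indicator {X : Type*} [MeasurableSpace X]
    {μ : Measure X} {f : X → ℝ} {s A : Set X} (hs : μ sᶜ = 0) (hA : MeasurableSet A)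
    (hf : EqOn f (A.indicator 1) s) : ∫ x, f x ∂μ = μ.real A := by
  rw [integral_congr_ae (hf.eventuallyEq_of_mem (mem_ae_iff.2 hs)), integral_indicator_one hA]

section Separated

variable {X ι : Type*} [MetricSpace X] {ε : ℝ} {y : ι → X}

theorem isClosed_image_of_pairwise_le_dist (hε : 0 < ε)
    (hy : Pairwise fun i j => ε ≤ dist (y i) (y j)) (S : Set ι) : IsClosed (y '' S) := by
  refine isClosed_of_pairwise_le_dist hε ?_
  rintro _ ⟨i, -, rfl⟩ _ ⟨j, -, rfl⟩ hne
  exact hy fun hij => hne (congrArg y hij)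

theorem notMem_thickening_image_of_pairwise_le_dist
    (hy : Pairwise fun i j => ε ≤ dist (y i) (y j)) {S : Set ι} {i : ι} (hi : i ∉ S) :
    y i ∉ thickening ε (y '' S) := by
  rw [mem_thickening_iff]
  rintro ⟨_, ⟨j, hj, rfl⟩, hlt⟩
  exact (hy (ne_of_mem_of_not_mem hj hi).symm).not_gt hlt

theorem thickenedIndicator_image_apply (hε : 0 < ε)
    (hy : Pairwise fun i j => ε ≤ dist (y i) (y j)) (S : Set ι) (i : ι) :
    (thickenedIndicator hε (y '' S) (y i) : ℝ) = S.indicator 1 i := by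
  by_cases hi : i ∈ S
  · simp [hi, thickenedIndicator_one hε _ (mem_image_of_mem y hi)]
  · simp [hi, thickenedIndicator_zero hε _ (notMem_thickening_image_of_pairwise_le_dist hy hi)]

theorem eqOn_thickenedIndicator_image_indicator (hε : 0 < ε)
    (hy : Pairwise fun i j => ε ≤ dist (y i) (y j)) (S : Set ι) :
    EqOn (fun x => (thickenedIndicator hε (y '' S) x : ℝ)) ((y '' S).indicator 1) (range y) := by
  rintro _ ⟨i, rfl⟩
  by_cases h : y i ∈ y '' S
  · simp [indicator_of_mem h, thickenedIndicator_one hε _ h]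
  · have hi : i ∉ S := fun hi => h (mem_image_of_mem y hi)
    rw [indicator_of_notMem h, ← indicator_of_notMem hi 1]
    exact thickenedIndicator_image_apply hε hy S i

end Separated

theorem tendsto_measure_image_of_weak_limit_ultrafilter_charge_separated_general
    {X : Type*} [MetricSpace X] [MeasurableSpace X] [BorelSpace X]
    (ε : ℝ) (hε : 0 < ε) (y : ℕ → X)
    (hy : ∀ i j : ℕ, i ≠ j → ε < dist (y i) (y j))
    (U : Ultrafilter ℕ)
    (μ : ℕ → Measure X) (hprob : ∀ n, IsProbabilityMeasure (μ n))
    (hrange : ∀ n, μ n (Set.range y) = 1)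
    (hconv : ∀ f : X → ℝ, UniformContinuous f → (∃ C : ℝ, ∀ x, |f x| ≤ C) →
      ∀ L : ℝ, Tendsto (f ∘ y) (U : Filter ℕ) (𝓝 L) →
        Tendsto (fun n => ∫ x, f x ∂(μ n)) atTop (𝓝 L)) :
    ∀ S : Set ℕ,
      (S ∈ U → Tendsto (fun n => μ n (y '' S)) atTop (𝓝 1)) ∧
      (S ∉ U → Tendsto (fun n => μ n (y '' S)) atTop (𝓝 0)) := by
  classical
  have hsep : Pairwise fun i j => ε ≤ dist (y i) (y j) := fun i j hij => (hy i j hij).le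
  intro S
  set f : X → ℝ := fun x => thickenedIndicator hε (y '' S) x
  have hf_uc : UniformContinuous f :=
    uniformContinuous_subtype_val.comp (lipschitzWith_thickenedIndicator hε _).uniformContinuous
  have hf_bdd : ∀ x, |f x| ≤ 1 := fun x => by
    simpa [f] using thickenedIndicator_le_one hε (y '' S) x
  have hf_y : Tendsto (f ∘ y) U (𝓝 (if S ∈ U then 1 else 0)) := by
    have hfy : f ∘ y = S.indicator 1 := funext (thickenedIndicator_image_apply hε hsep S)
    exact hfy ▸ U.tendsto_indicator_const S 1
  have hrange_null : ∀ n, μ n (range y)ᶜ = 0 := fun n =>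
    (prob_compl_eq_zero_iff (by simpa using
      (isClosed_image_of_pairwise_le_dist hε hsep univ).measurableSet)).2 (hrange n)
  have hint : ∀ n, ∫ x, f x ∂μ n = (μ n).real (y '' S) := fun n =>
    integral_eq_measureReal_of_eqOn_indicator (hrange_null n)
      (isClosed_image_of_pairwise_le_dist hε hsep S).measurableSet
      (eqOn_thickenedIndicator_image_indicator hε hsep S)
  have hlim := hconv f hf_uc ⟨1, hf_bdd⟩ _ hf_y
  simp only [hint, measureReal_def] at hlim
  have hmeas : Tendsto (fun n => μ n (y '' S)) atTop (𝓝 (.ofReal (if S ∈ U then 1 else 0))) :=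
    (ENNReal.tendsto_toReal_iff (fun n => measure_ne_top _ _) ENNReal.ofReal_ne_top).1 <| by
      rwa [ENNReal.toReal_ofReal (by split_ifs <;> norm_num)]
  exact ⟨fun hS => by simpa [hS] using hmeas, fun hS => by simpa [hS] using hmeas⟩

/-- if `y : ℕ → X` is a uniformly `ε`-separated sequence, `U` is a free
ultrafilter on `ℕ`, and the Borel probability measures `μ n` concentrate on the range of `y`
and converge weakly (against bounded uniformly continuous functions) to the charge determined
by `U` and `y`, then `μ n (y '' S) → 1` for `S ∈ U` and `μ n (y '' S) → 0` for `S ∉ U`. -/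
theorem tendsto_measure_image_of_weak_limit_ultrafilter_charge_separated
    {X : Type*} [MetricSpace X] [MeasurableSpace X] [BorelSpace X]
    (ε : ℝ) (hε : 0 < ε) (y : ℕ → X)
    (hy : ∀ i j : ℕ, i ≠ j → ε < dist (y i) (y j))
    (U : Ultrafilter ℕ) (hU : (U : Filter ℕ) ≤ Filter.cofinite)
    (μ : ℕ → Measure X) (hprob : ∀ n, IsProbabilityMeasure (μ n))
    (hrange : ∀ n, μ n (Set.range y) = 1)
    (hconv : ∀ f : X → ℝ, UniformContinuous f → (∃ C : ℝ, ∀ x, |f x| ≤ C) →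
      ∀ L : ℝ, Tendsto (f ∘ y) (U : Filter ℕ) (𝓝 L) →
        Tendsto (fun n => ∫ x, f x ∂(μ n)) atTop (𝓝 L)) :
    ∀ S : Set ℕ,
      (S ∈ U → Tendsto (fun n => μ n (y '' S)) atTop (𝓝 1)) ∧
      (S ∉ U → Tendsto (fun n => μ n (y '' S)) atTop (𝓝 0)) :=
  tendsto_measure_image_of_weak_limit_ultrafilter_charge_separated_general ε hε y hy U μ hprob
    hrange hconv
end

section
/- Consider the space X = (0, 1] with the Euclidean metric, and for n ≥ 1 let δ_{1/n} denote the Dirac probability measure at the point 1/n ∈ X. Then: (a) for every bounded uniformly continuous f : (0, 1] → ℝ, the sequence n ↦ ∫ f dδ_{1/n} = f(1/n) converges; and (b) there exists a bounded continuous g : (0, 1] → ℝ, namely g(x) = sin(1/x), such that the sequence n ↦ ∫ g dδ_{1/n} = sin(n) does not converge. -/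
open MeasureTheory Filter Topology

/-- The point `1/(n+1)` of the space `(0, 1]`, for `n : ℕ`. -/
noncomputable def unitIocPt (n : ℕ) : Set.Ioc (0 : ℝ) 1 :=
  ⟨1 / (n + 1), ⟨by positivity, by
    rw [div_le_one (by positivity)]
    exact le_add_of_nonneg_left (Nat.cast_nonneg n)⟩⟩

lemma cauchySeq_unitIocPt : CauchySeq (fun n : ℕ => unitIocPt n) := by
  have h : CauchySeq (fun n : ℕ => 1 / ((n : ℝ) + 1)) :=
    tendsto_one_div_add_atTop_nhds_zero_nat.cauchySeq
  rw [Metric.cauchySeq_iff] at h ⊢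
  simpa [Subtype.dist_eq, unitIocPt] using h

lemma sin_succ_not_tendsto :
    ¬ ∃ L : ℝ, Tendsto (fun n : ℕ => Real.sin ((n : ℝ) + 1)) atTop (𝓝 L) := by
  rintro ⟨L, hL⟩
  set s : ℕ → ℝ := fun n => Real.sin ((n : ℝ) + 1) with hs
  have h1 : Tendsto (fun n : ℕ => s (n + 1)) atTop (𝓝 L) :=
    hL.comp (tendsto_add_atTop_nat 1)
  have h2 : Tendsto (fun n : ℕ => s (n + 2)) atTop (𝓝 L) :=
    hL.comp (tendsto_add_atTop_nat 2)
  -- sum identity: s (n+2) + s n = 2 * s (n+1) * cos 1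
  have key : ∀ n : ℕ, s (n + 2) + s n = 2 * s (n + 1) * Real.cos 1 := by
    intro n
    have e1 : ((n : ℝ) + 2) + 1 = ((n : ℝ) + 1 + 1) + 1 := by ring
    have e2 : (n : ℝ) + 1 = ((n : ℝ) + 1 + 1) - 1 := by ring
    simp only [hs, Nat.cast_add, Nat.cast_ofNat, Nat.cast_one]
    rw [e1, e2, Real.sin_add, Real.sin_sub]
    ring
  have hLsum : Tendsto (fun n : ℕ => s (n + 2) + s n) atTop (𝓝 (L + L)) := h2.add hL
  have hLsum' : Tendsto (fun n : ℕ => 2 * s (n + 1) * Real.cos 1) atTop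
      (𝓝 (2 * L * Real.cos 1)) := by
    exact ((h1.const_mul 2).mul_const (Real.cos 1))
  have hEq : L + L = 2 * L * Real.cos 1 := by
    refine tendsto_nhds_unique hLsum ?_
    exact hLsum'.congr (fun n => (key n).symm)
  have hcos1 : Real.cos 1 < 1 := by
    linarith [Real.cos_one_le]
  have hL0 : L = 0 := by nlinarith
  -- difference identity: s (n+2) - s n = 2 * cos (n + 2) * sin 1
  have key2 : ∀ n : ℕ, Real.cos ((n : ℝ) + 2) = (s (n + 2) - s n) / (2 * Real.sin 1) := by
    intro n
    have hsin1 : Real.sin 1 ≠ 0 := by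
      have := Real.sin_pos_of_pos_of_lt_pi (x := 1) one_pos (by
        linarith [Real.pi_gt_three])
      linarith
    have e1 : ((n : ℝ) + 2) + 1 = ((n : ℝ) + 2) + 1 := rfl
    have : s (n + 2) - s n = 2 * Real.cos ((n : ℝ) + 2) * Real.sin 1 := by
      have e2 : ((n : ℝ) + 1) = ((n : ℝ) + 2) - 1 := by ring
      simp only [hs, Nat.cast_add, Nat.cast_ofNat, Nat.cast_one]
      rw [show ((n : ℝ) + 2) + 1 = ((n:ℝ)+2) + 1 from rfl, e2, Real.sin_add, Real.sin_sub]
      ring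
    rw [this]
    field_simp
  have hsin1 : Real.sin 1 ≠ 0 := by
    have := Real.sin_pos_of_pos_of_lt_pi (x := 1) one_pos (by
      linarith [Real.pi_gt_three])
    linarith
  have hcosT : Tendsto (fun n : ℕ => Real.cos ((n : ℝ) + 2)) atTop (𝓝 0) := by
    have : Tendsto (fun n : ℕ => (s (n + 2) - s n) / (2 * Real.sin 1)) atTop
        (𝓝 ((L - L) / (2 * Real.sin 1))) := (h2.sub hL).div_const _
    rw [hL0] at this
    simpa using this.congr (fun n => (key2 n).symm)
  have hsinT : Tendsto (fun n : ℕ => s (n + 1)) atTop (𝓝 0) := hL0 ▸ h1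
  -- but sin² + cos² = 1
  have hone : Tendsto (fun n : ℕ => s (n + 1) ^ 2 + Real.cos ((n : ℝ) + 2) ^ 2) atTop
      (𝓝 0) := by
    have := (hsinT.mul hsinT).add (hcosT.mul hcosT)
    simpa [sq] using this
  have hone' : ∀ n : ℕ, s (n + 1) ^ 2 + Real.cos ((n : ℝ) + 2) ^ 2 = 1 := by
    intro n
    have : ((n : ℝ) + 1 + 1) = ((n : ℝ) + 2) := by ring
    simp only [hs, Nat.cast_add, Nat.cast_one, this]
    exact Real.sin_sq_add_cos_sq _
  have : Tendsto (fun _ : ℕ => (1 : ℝ)) atTop (𝓝 0) := hone.congr hone'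
  have := tendsto_nhds_unique this tendsto_const_nhds
  norm_num at this

/-- Example 5.10: On `X = (0, 1]`, (a) for every bounded uniformly continuous
`f : X → ℝ`, `∫ f dδ_{1/n} = f (1/n)` and the sequence `n ↦ ∫ f dδ_{1/n}` converges;
(b) for `g x = sin (1/x)`, a bounded continuous function on `X`,
`∫ g dδ_{1/n} = sin n` and the sequence `n ↦ ∫ g dδ_{1/n}` does not converge. -/
theorem dirac_seq_unitIoc_uniformly_continuous_converges_but_continuous_not :
    (∀ f : Set.Ioc (0 : ℝ) 1 → ℝ, UniformContinuous f → (∃ C : ℝ, ∀ x, |f x| ≤ C) →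
      (∀ n : ℕ, ∫ x, f x ∂(Measure.dirac (unitIocPt n)) = f (unitIocPt n)) ∧
      ∃ L : ℝ, Tendsto (fun n : ℕ => ∫ x, f x ∂(Measure.dirac (unitIocPt n)))
        atTop (𝓝 L)) ∧
    (Continuous fun x : Set.Ioc (0 : ℝ) 1 => Real.sin (1 / (x : ℝ))) ∧
    (∃ C : ℝ, ∀ x : Set.Ioc (0 : ℝ) 1, |Real.sin (1 / (x : ℝ))| ≤ C) ∧
    (∀ n : ℕ, ∫ x, Real.sin (1 / (x : ℝ)) ∂(Measure.dirac (unitIocPt n)) =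
      Real.sin (n + 1)) ∧
    ¬ ∃ L : ℝ, Tendsto
        (fun n : ℕ => ∫ x, Real.sin (1 / (x : ℝ)) ∂(Measure.dirac (unitIocPt n)))
        atTop (𝓝 L) := by
  have hcont : Continuous fun x : Set.Ioc (0 : ℝ) 1 => Real.sin (1 / (x : ℝ)) := by
    apply Real.continuous_sin.comp
    exact continuous_const.div continuous_subtype_val (fun x => ne_of_gt x.2.1)
  have hint : ∀ n : ℕ, ∫ x, Real.sin (1 / (x : ℝ)) ∂(Measure.dirac (unitIocPt n)) =
      Real.sin (n + 1) := by
    intro n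
    rw [integral_dirac' _ _ hcont.measurable.stronglyMeasurable]
    have : (unitIocPt n : ℝ) = 1 / ((n : ℝ) + 1) := rfl
    rw [this, one_div_one_div]
  refine ⟨fun f hf _ => ?_, hcont, ⟨1, fun x => Real.abs_sin_le_one _⟩, hint, ?_⟩
  · have hmeas : ∀ n : ℕ, ∫ x, f x ∂(Measure.dirac (unitIocPt n)) = f (unitIocPt n) :=
      fun n => integral_dirac' _ _ hf.continuous.measurable.stronglyMeasurable
    refine ⟨hmeas, ?_⟩
    have hC : CauchySeq (fun n : ℕ => f (unitIocPt n)) :=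
      hf.comp_cauchySeq cauchySeq_unitIocPt
    obtain ⟨L, hL⟩ := cauchySeq_tendsto_of_complete hC
    exact ⟨L, hL.congr (fun n => (hmeas n).symm)⟩
  · rintro ⟨L, hL⟩
    exact sin_succ_not_tendsto ⟨L, hL.congr (fun n => by rw [hint n])⟩
end
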